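/- arXiv:1602.01140 — 5 statements merged into one kernel-verified Lean document; each statement's English description precedes it below -/
import Mathlib

section
/- Let N ∈ 𝔑(−∞,∞) (noise supported on all of ℝ). Let (a_k) be a sequence decreasing monotonically to −∞ and (b_k) increasing monotonically to ∞ with a₀ < b₀, and for each k define the truncated normalized density p_{N_k}(n) := p_N(n)/∫_{a_k}^{b_k} p_N(ξ)dξ for n ∈ [a_k,b_k] and p_{N_k}(n) := 0 otherwise, with N_k a random variable with density p_{N_k}. Then: (1) ∫_ℝ |p_N(n) − p_{N_k}(n)| dn → 0 as k → ∞; (2) h(N_k) → h(N) as k → ∞; and (3) for every function g: ℝ → ℝ which is Lebesgue-a.e. differentiable with g' ≥ −1 a.e. and ∫ p_N |ln(1+g')| dn < ∞, one has ∫ p_{N_k} |ln(1+g')| dn < ∞ for every k and h(N_k) + ∫ p_{N_k} ln(1+g') dn → h(N) + ∫ p_N ln(1+g') dn as k → ∞. -/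
open MeasureTheory Real Filter Set
open scoped ENNReal Topology ProbabilityTheory

noncomputable section

variable {Ω : Type*} [MeasureSpace Ω]

/-- `Z` has a law absolutely continuous w.r.t. Lebesgue measure, with density `p`. -/
def HasDens (Z : Ω → ℝ) (p : ℝ → ℝ) : Prop :=
  Measurable Z ∧ Measurable p ∧ (∀ x, 0 ≤ p x) ∧
    Measure.map Z (ℙ : Measure Ω) = volume.withDensity (fun x => ENNReal.ofReal (p x))

/-- Differential entropy of a density: `h = -∫ p ln p`. -/
def dEnt (p : ℝ → ℝ) : ℝ := -∫ y, p y * Real.log (p y)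

/-- The differential entropy of the density `p` is well defined: `∫ p |ln p| < ∞`. -/
def EntWellDef (p : ℝ → ℝ) : Prop := Integrable (fun y => p y * Real.log (p y))

/-- The real points of the open interval `(a,b)` with extended-real endpoints. -/
def eIoo (a b : EReal) : Set ℝ := {x : ℝ | a < (x : EReal) ∧ (x : EReal) < b}

/-- The noise class `𝔑(a,b)`: `N` takes values in the closure of `(a,b)`, is integrable,
has a Lebesgue density `pN` which is `C¹` and strictly positive on `(a,b)` and vanishes
outside, and has well-defined differential entropy. -/
structure IsNoise (a b : EReal) (N : Ω → ℝ) (pN : ℝ → ℝ) : Prop where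
  prob : IsProbabilityMeasure (ℙ : Measure Ω)
  lt : a < b
  mem : ∀ᵐ ω ∂(ℙ : Measure Ω), a ≤ (N ω : EReal) ∧ (N ω : EReal) ≤ b
  int : Integrable N (ℙ : Measure Ω)
  dens : HasDens N pN
  smooth : ContDiffOn ℝ 1 pN (eIoo a b)
  pos : ∀ x ∈ eIoo a b, 0 < pN x
  zero : ∀ x ∉ eIoo a b, pN x = 0
  went : EntWellDef pN

/-- Cost function: `C¹`, convex, with derivative a.e. nonzero. -/
structure IsCost (G : ℝ → ℝ) : Prop where
  smooth : ContDiff ℝ 1 G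
  convex : ConvexOn ℝ Set.univ G
  dne : ∀ᵐ x ∂(volume : Measure ℝ), deriv G x ≠ 0

/-- `β ∈ I_G = (inf G, ∞)`, i.e. `β` is strictly above the infimum of `G`. -/
def InIG (G : ℝ → ℝ) (β : ℝ) : Prop := ∃ x, G x < β

/-- Admissible input: integrable, with integrable cost and average cost at most `β`. -/
def Admissible (G : ℝ → ℝ) (β : ℝ) (X : Ω → ℝ) : Prop :=
  Measurable X ∧ Integrable X (ℙ : Measure Ω) ∧
    Integrable (fun ω => G (X ω)) (ℙ : Measure Ω) ∧
    (∫ ω, G (X ω) ∂(ℙ : Measure Ω)) ≤ β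

/-- The set of achievable output entropies `{h(Y) : Y ∈ Σ(N;G,β)}` (joint couplings). -/
def SigmaEnt (N : Ω → ℝ) (G : ℝ → ℝ) (β : ℝ) : Set ℝ :=
  {h | ∃ (X : Ω → ℝ) (pY : ℝ → ℝ), Admissible G β X ∧
        HasDens (fun ω => X ω + N ω) pY ∧ EntWellDef pY ∧ h = dEnt pY}

/-- The set of achievable output entropies `{h(Y) : Y ∈ Σ_⊥(N;G,β)}` (independent input). -/
def SigmaEntIndep (N : Ω → ℝ) (G : ℝ → ℝ) (β : ℝ) : Set ℝ :=
  {h | ∃ (X : Ω → ℝ) (pY : ℝ → ℝ), Admissible G β X ∧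
        ProbabilityTheory.IndepFun X N (ℙ : Measure Ω) ∧
        HasDens (fun ω => X ω + N ω) pY ∧ EntWellDef pY ∧ h = dEnt pY}

/-- Achievable output entropies with an additional amplitude constraint `X ∈ s` a.s. -/
def SigmaEntAmp (N : Ω → ℝ) (G : ℝ → ℝ) (β : ℝ) (s : Set ℝ) : Set ℝ :=
  {h | ∃ (X : Ω → ℝ) (pY : ℝ → ℝ), Admissible G β X ∧
        (∀ᵐ ω ∂(ℙ : Measure Ω), X ω ∈ s) ∧
        HasDens (fun ω => X ω + N ω) pY ∧ EntWellDef pY ∧ h = dEnt pY}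

/-- The filter of real numbers approaching the extended-real endpoint `a` from the right. -/
def rightNhds (a : EReal) : Filter ℝ :=
  Filter.comap (fun x : ℝ => (x : EReal)) (nhdsWithin a (Set.Ioi a))

/-- The filter of real numbers approaching the extended-real endpoint `b` from the left. -/
def leftNhds (b : EReal) : Filter ℝ :=
  Filter.comap (fun x : ℝ => (x : EReal)) (nhdsWithin b (Set.Iio b))

/-- The hypotheses of Theorem 1: constants `C, λ > 0`, a `C¹` curve `g` with derivative `g'`
and a primitive `Φ` of `G' ∘ g`, satisfying the first integral of the Euler–Lagrange
equation, the natural boundary conditions, the isoperimetric constraint `E G(g(N)) = β`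
and `E|g(N)| < ∞`. -/
structure FirstIntegral (a b : EReal) (N : Ω → ℝ) (pN G : ℝ → ℝ) (β : ℝ)
    (C lam : ℝ) (g g' Φ : ℝ → ℝ) : Prop where
  hC : 0 < C
  hlam : 0 < lam
  hgmeas : Measurable g
  hg : ∀ n ∈ eIoo a b, HasDerivAt g (g' n) n
  hg' : ContinuousOn g' (eIoo a b)
  hΦ : ∀ n ∈ eIoo a b, HasDerivAt Φ (deriv G (g n)) n
  heq : ∀ n ∈ eIoo a b, pN n = C * (1 + g' n) * Real.exp (-(lam * (Φ n + G (g n))))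
  hbl : Filter.Tendsto (fun n => pN n / (1 + g' n))
    (rightNhds a ⊓ Filter.principal (eIoo a b)) (nhds 0)
  hbr : Filter.Tendsto (fun n => pN n / (1 + g' n))
    (leftNhds b ⊓ Filter.principal (eIoo a b)) (nhds 0)
  hGint : Integrable (fun ω => G (g (N ω))) (ℙ : Measure Ω)
  hcost : (∫ ω, G (g (N ω)) ∂(ℙ : Measure Ω)) = β
  hgint : Integrable (fun ω => g (N ω)) (ℙ : Measure Ω)

/-- Fourier transform of a finite Borel measure on `ℝ`: `F[μ](f) = ∫ e^{-2πifξ} dμ(ξ)`. -/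
def charF (μ : Measure ℝ) (f : ℝ) : ℂ :=
  ∫ ξ, Complex.exp (Complex.ofReal (-(2 * Real.pi * f * ξ)) * Complex.I) ∂μ

/-- Positive definiteness of a complex-valued function on `ℝ`: every Hermitian sum
`∑_{l,m} φ(f_l - f_m) z_l z̄_m` is a nonnegative real number. -/
def PosDefFn (φ : ℝ → ℂ) : Prop :=
  ∀ (n : ℕ) (f : Fin n → ℝ) (z : Fin n → ℂ),
    0 ≤ (∑ l, ∑ m, φ (f l - f m) * z l * (starRingEnd ℂ) (z m)).re ∧
    (∑ l, ∑ m, φ (f l - f m) * z l * (starRingEnd ℂ) (z m)).im = 0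


/-- Lemma 1, first part, case `(a,b) = ℝ`: truncating and normalizing
the density of a noise `N ∈ 𝔑(−∞,∞)` to `[a_k, b_k]` with `a_k ↓ −∞`, `b_k ↑ ∞` yields
densities converging to `p_N` in `L¹`, entropies `h(N_k) → h(N)`, and convergence of the
entropy functional `H_{N_k}[g] → H_N[g]` for every admissible curve `g`. -/
theorem truncation_L1_entropy_convergence
    {Ω : Type*} [MeasureSpace Ω]
    (N : Ω → ℝ) (pN : ℝ → ℝ) (hN : IsNoise ⊥ ⊤ N pN)
    (aseq bseq : ℕ → ℝ) (hanti : Antitone aseq) (hmono : Monotone bseq)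
    (ha : Tendsto aseq atTop atBot) (hb : Tendsto bseq atTop atTop)
    (h0 : aseq 0 < bseq 0)
    (pNk : ℕ → ℝ → ℝ)
    (hpNk : ∀ k n, pNk k n =
      if n ∈ Set.Icc (aseq k) (bseq k) then
        pN n / (∫ x in Set.Icc (aseq k) (bseq k), pN x) else 0) :
    Tendsto (fun k => ∫ n, |pN n - pNk k n|) atTop (𝓝 0) ∧
    Tendsto (fun k => dEnt (pNk k)) atTop (𝓝 (dEnt pN)) ∧
    (∀ g g' : ℝ → ℝ,
      (∀ᵐ n ∂(volume : Measure ℝ), HasDerivAt g (g' n) n) →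
      (∀ᵐ n ∂(volume : Measure ℝ), -1 ≤ g' n) →
      Integrable (fun n => pN n * |Real.log (1 + g' n)|) →
      (∀ k, Integrable (fun n => pNk k n * |Real.log (1 + g' n)|)) ∧
      Tendsto (fun k => dEnt (pNk k) + ∫ n, pNk k n * Real.log (1 + g' n)) atTop
        (𝓝 (dEnt pN + ∫ n, pN n * Real.log (1 + g' n)))) := by
  classical
  obtain ⟨Nmeas, pmeas, pnonneg, hmap⟩ := hN.dens
  have hprob := hN.prob
  have hpos : ∀ x : ℝ, 0 < pN x := fun x =>
    hN.pos x ⟨EReal.bot_lt_coe x, EReal.coe_lt_top x⟩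
  -- total mass 1
  have hlint : ∫⁻ x, ENNReal.ofReal (pN x) = 1 := by
    have hp : IsProbabilityMeasure (Measure.map N ℙ) :=
      Measure.isProbabilityMeasure_map Nmeas.aemeasurable
    rw [hmap] at hp
    have h1 := hp.measure_univ
    rwa [withDensity_apply _ MeasurableSet.univ, Measure.restrict_univ] at h1
  have hint : Integrable pN := by
    refine ⟨pmeas.aestronglyMeasurable, ?_⟩
    rw [hasFiniteIntegral_iff_ofReal (ae_of_all _ pnonneg), hlint]
    exact ENNReal.one_lt_top
  have hintpN : ∫ x, pN x = 1 := by
    rw [integral_eq_lintegral_of_nonneg_ae (ae_of_all _ pnonneg) pmeas.aestronglyMeasurable,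
      hlint]
    rfl
  set c : ℕ → ℝ := fun k => ∫ x in Set.Icc (aseq k) (bseq k), pN x with hcdef
  have hcdef' : ∀ k, c k = ∫ x in Set.Icc (aseq k) (bseq k), pN x := fun k => rfl
  -- positivity and monotonicity of c
  have hc0 : 0 < c 0 := by
    rw [hcdef' 0, setIntegral_pos_iff_support_of_nonneg_ae (ae_of_all _ pnonneg)
      hint.integrableOn]
    have hsupp : Function.support pN ∩ Set.Icc (aseq 0) (bseq 0) =
        Set.Icc (aseq 0) (bseq 0) :=
      Set.inter_eq_right.mpr fun x _ => (hpos x).ne'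
    rw [hsupp, Real.volume_Icc]
    exact ENNReal.ofReal_pos.mpr (by linarith)
  have hcmono : Monotone c := by
    intro j k hjk
    exact setIntegral_mono_set hint.integrableOn (ae_of_all _ pnonneg)
      (HasSubset.Subset.eventuallyLE (Set.Icc_subset_Icc (hanti hjk) (hmono hjk)))
  have hck : ∀ k, 0 < c k := fun k => lt_of_lt_of_le hc0 (hcmono (Nat.zero_le k))
  have hcle : ∀ k, c k ≤ 1 := by
    intro k
    rw [← hintpN]
    exact setIntegral_le_integral hint (ae_of_all _ pnonneg)
  -- key convergence lemma
  have key : ∀ f : ℝ → ℝ, Integrable f →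
      Tendsto (fun k => ∫ x in Set.Icc (aseq k) (bseq k), f x) atTop (𝓝 (∫ x, f x)) := by
    intro f hf
    have h1 : ∀ k, (∫ x in Set.Icc (aseq k) (bseq k), f x) =
        ∫ x, (Set.Icc (aseq k) (bseq k)).indicator f x := fun k =>
      (integral_indicator measurableSet_Icc).symm
    simp only [h1]
    refine tendsto_integral_of_dominated_convergence (fun x => |f x|)
      (fun k => hf.1.indicator measurableSet_Icc) hf.abs ?_ ?_
    · intro k
      refine ae_of_all _ fun x => ?_
      by_cases hx : x ∈ Set.Icc (aseq k) (bseq k)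
      · simp [Set.indicator_of_mem hx, Real.norm_eq_abs]
      · simp [Set.indicator_of_notMem hx, abs_nonneg]
    · refine ae_of_all _ fun x => ?_
      have h2 : ∀ᶠ k in atTop, x ∈ Set.Icc (aseq k) (bseq k) := by
        filter_upwards [ha.eventually (Filter.eventually_le_atBot x),
          hb.eventually (Filter.eventually_ge_atTop x)] with k hk1 hk2
        exact ⟨hk1, hk2⟩
      exact Tendsto.congr' (h2.mono fun k hk => (Set.indicator_of_mem hk f).symm)
        tendsto_const_nhds
  have hctend : Tendsto c atTop (𝓝 1) := by
    have h := key pN hint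
    rwa [hintpN] at h
  -- pNk as indicator
  have hpNk' : ∀ k, pNk k = (Set.Icc (aseq k) (bseq k)).indicator (fun n => pN n / c k) := by
    intro k
    funext n
    rw [hpNk k n]
    by_cases hn : n ∈ Set.Icc (aseq k) (bseq k)
    · rw [Set.indicator_of_mem hn, if_pos hn, hcdef' k]
    · rw [Set.indicator_of_notMem hn, if_neg hn]
  have hpNkmeas : ∀ k, Measurable (pNk k) := by
    intro k
    rw [hpNk' k]
    exact (pmeas.div_const _).indicator measurableSet_Icc
  have hpNknn : ∀ k n, 0 ≤ pNk k n := by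
    intro k n
    rw [hpNk k n]
    split_ifs
    · exact div_nonneg (pnonneg n) (le_of_lt (by rw [← hcdef' k]; exact hck k))
    · exact le_refl 0
  have hpNkint : ∀ k, Integrable (pNk k) := by
    intro k
    rw [hpNk' k]
    exact (hint.div_const _).indicator measurableSet_Icc
  have hpNkint1 : ∀ k, ∫ n, pNk k n = 1 := by
    intro k
    rw [hpNk' k, integral_indicator measurableSet_Icc, integral_div, ← hcdef' k]
    exact div_self (hck k).ne'
  -- Part 1
  have habs : ∀ k, (∫ n, |pN n - pNk k n|) = 2 * (1 - c k) := by
    intro k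
    have hle : ∀ n, pN n ≤ pN n / c k := by
      intro n
      rw [le_div_iff₀ (hck k)]
      nlinarith [pnonneg n, hcle k, hck k]
    have hptw : (fun n => |pN n - pNk k n|) = fun n =>
        (pNk k n - (Set.Icc (aseq k) (bseq k)).indicator pN n) +
        (pN n - (Set.Icc (aseq k) (bseq k)).indicator pN n) := by
      funext n
      rw [hpNk' k]
      by_cases hn : n ∈ Set.Icc (aseq k) (bseq k)
      · simp only [Set.indicator_of_mem hn]
        rw [abs_of_nonpos (by linarith [hle n])]
        ring
      · simp only [Set.indicator_of_notMem hn]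
        rw [sub_zero, abs_of_nonneg (pnonneg n)]
        ring
    have hindint : Integrable ((Set.Icc (aseq k) (bseq k)).indicator pN) :=
      hint.indicator measurableSet_Icc
    have i1 : Integrable (fun n => pNk k n - (Set.Icc (aseq k) (bseq k)).indicator pN n) :=
      (hpNkint k).sub hindint
    have i2 : Integrable (fun n => pN n - (Set.Icc (aseq k) (bseq k)).indicator pN n) :=
      hint.sub hindint
    rw [hptw, integral_add i1 i2,
      integral_sub (hpNkint k) hindint, integral_sub hint hindint,
      hpNkint1 k, hintpN, integral_indicator measurableSet_Icc, ← hcdef' k]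
    ring
  have part1 : Tendsto (fun k => ∫ n, |pN n - pNk k n|) atTop (𝓝 0) := by
    have h2 : Tendsto (fun k => 2 * (1 - c k)) atTop (𝓝 (2 * (1 - 1))) :=
      (tendsto_const_nhds.sub hctend).const_mul 2
    simp only [habs]
    simpa using h2
  -- Part 2
  have hA := key (fun x => pN x * Real.log (pN x)) hN.went
  have hent : ∀ k, dEnt (pNk k) =
      -((∫ x in Set.Icc (aseq k) (bseq k), pN x * Real.log (pN x)) / c k) +
        Real.log (c k) := by
    intro k
    have hptw : (fun n => pNk k n * Real.log (pNk k n)) =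
        (Set.Icc (aseq k) (bseq k)).indicator
          (fun n => pN n * Real.log (pN n) / c k - Real.log (c k) / c k * pN n) := by
      funext n
      rw [hpNk' k]
      by_cases hn : n ∈ Set.Icc (aseq k) (bseq k)
      · simp only [Set.indicator_of_mem hn]
        rw [Real.log_div (hpos n).ne' (hck k).ne']
        ring
      · simp [Set.indicator_of_notMem hn]
    have hi1 : IntegrableOn (fun n => pN n * Real.log (pN n) / c k)
        (Set.Icc (aseq k) (bseq k)) := (hN.went.div_const _).integrableOn
    have hi2 : IntegrableOn (fun n => Real.log (c k) / c k * pN n)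
        (Set.Icc (aseq k) (bseq k)) := (hint.const_mul _).integrableOn
    have hd : Real.log (c k) / c k * c k = Real.log (c k) :=
      div_mul_cancel₀ _ (hck k).ne'
    unfold dEnt
    rw [hptw, integral_indicator measurableSet_Icc, integral_sub hi1 hi2,
      integral_div, integral_const_mul _ _, ← hcdef' k, hd]
    ring
  have part2 : Tendsto (fun k => dEnt (pNk k)) atTop (𝓝 (dEnt pN)) := by
    have h1 : Tendsto (fun k =>
        -((∫ x in Set.Icc (aseq k) (bseq k), pN x * Real.log (pN x)) / c k) +
          Real.log (c k)) atTop
        (𝓝 (-((∫ x, pN x * Real.log (pN x)) / 1) + Real.log 1)) :=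
      ((hA.div hctend one_ne_zero).neg).add
        ((Real.continuousAt_log one_ne_zero).tendsto.comp hctend)
    simp only [hent]
    simpa [dEnt] using h1
  refine ⟨part1, part2, ?_⟩
  -- Part 3
  intro g g' hderiv hge hgint
  have haem : AEMeasurable g' (volume : Measure ℝ) := by
    refine (measurable_deriv g).aemeasurable.congr ?_
    filter_upwards [hderiv] with n hn
    exact hn.deriv
  have hlog : AEMeasurable (fun n => Real.log (1 + g' n)) (volume : Measure ℝ) :=
    Real.measurable_log.comp_aemeasurable (aemeasurable_const.add haem)
  have hintlog : Integrable (fun n => pN n * Real.log (1 + g' n)) := by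
    refine ⟨(pmeas.aemeasurable.mul hlog).aestronglyMeasurable, ?_⟩
    refine hgint.2.mono (ae_of_all _ fun n => ?_)
    simp [Real.norm_eq_abs, abs_mul, abs_abs, abs_of_nonneg (pnonneg n)]
  have hintk : ∀ k, Integrable (fun n => pNk k n * |Real.log (1 + g' n)|) := by
    intro k
    refine ⟨((hpNkmeas k).aemeasurable.mul (measurable_abs.comp_aemeasurable hlog)).aestronglyMeasurable, ?_⟩
    refine (hgint.const_mul (1 / c 0)).2.mono (ae_of_all _ fun n => ?_)
    have hb : pNk k n ≤ 1 / c 0 * pN n := by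
      rw [hpNk k n]
      split_ifs with hn
      · rw [← hcdef' k, one_div, inv_mul_eq_div]
        gcongr
        · exact pnonneg n
        · exact hcmono (Nat.zero_le k)
      · exact mul_nonneg (one_div_nonneg.mpr hc0.le) (pnonneg n)
    calc ‖pNk k n * |Real.log (1 + g' n)|‖
        = pNk k n * |Real.log (1 + g' n)| := by
          rw [Real.norm_eq_abs, abs_mul, abs_of_nonneg (hpNknn k n), abs_abs]
      _ ≤ 1 / c 0 * pN n * |Real.log (1 + g' n)| :=
          mul_le_mul_of_nonneg_right hb (abs_nonneg _)
      _ ≤ ‖1 / c 0 * (pN n * |Real.log (1 + g' n)|)‖ := by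
          rw [Real.norm_eq_abs, ← mul_assoc]
          exact le_abs_self _
  refine ⟨hintk, ?_⟩
  have hA' := key _ hintlog
  have heq3 : ∀ k, (∫ n, pNk k n * Real.log (1 + g' n)) =
      (∫ x in Set.Icc (aseq k) (bseq k), pN x * Real.log (1 + g' x)) / c k := by
    intro k
    have hptw : (fun n => pNk k n * Real.log (1 + g' n)) =
        (Set.Icc (aseq k) (bseq k)).indicator
          (fun n => pN n * Real.log (1 + g' n) / c k) := by
      funext n
      rw [hpNk' k]
      by_cases hn : n ∈ Set.Icc (aseq k) (bseq k)
      · simp only [Set.indicator_of_mem hn]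
        ring
      · simp [Set.indicator_of_notMem hn]
    rw [hptw, integral_indicator measurableSet_Icc, integral_div]
  have h3 : Tendsto (fun k =>
      (∫ x in Set.Icc (aseq k) (bseq k), pN x * Real.log (1 + g' x)) / c k) atTop
      (𝓝 ((∫ x, pN x * Real.log (1 + g' x)) / 1)) := hA'.div hctend one_ne_zero
  simp only [heq3]
  simpa using part2.add h3
end
end

section
/- Let N ∈ 𝔑(a,b), G a cost function and β ∈ I_G. Let g₁, g₂ : (a,b) → ℝ be Lebesgue-a.e. differentiable with g₁' > −1 and g₂' > −1 a.e. in (a,b), satisfying E G(g_i(N)) ≤ β and ∫_a^b p_N |ln(1+g_i')| dn < ∞ for i = 1, 2, and let α₁, α₂ > 0 with α₁ + α₂ = 1. Then the convex combination g := α₁g₁ + α₂g₂ is Lebesgue-a.e. differentiable with g' > −1 a.e., satisfies E G(g(N)) ≤ β and ∫_a^b p_N |ln(1+g')| dn < ∞, and the entropy functional is concave: ∫_a^b p_N ln(1 + α₁g₁' + α₂g₂') dn ≥ α₁ ∫_a^b p_N ln(1+g₁') dn + α₂ ∫_a^b p_N ln(1+g₂') dn. -/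
open MeasureTheory Real Filter Set
open scoped ENNReal Topology ProbabilityTheory

noncomputable section

variable {Ω : Type*} [MeasureSpace Ω]

/-!
Pointwise, convexity of `G` gives `G (α₁ x + α₂ y) ≤ α₁ G x + α₂ G y` and concavity of `log` gives
`α₁ log u + α₂ log v ≤ log (α₁ u + α₂ v)`; integrating yields the cost bound and the concavity of
the entropy functional. The integrability claims need two-sided bounds: `1 + g'` lies between
`1 + g₁'` and `1 + g₂'`, so `|log (1 + g')| ≤ |log (1 + g₁')| + |log (1 + g₂')|`, and a convex
function on `ℝ` is bounded below on `[x, y]` by `min (G x) (G y)` up to a constant independent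
of `x` and `y`.
-/

/-- Either `G` attains a global minimum `m`, or on no segment does it drop below both endpoint
values: otherwise its minimum over the segment is an interior local minimum, hence global by
convexity. -/
lemma ConvexOn.exists_min_le_of_mem_segment {G : ℝ → ℝ} (hG : ConvexOn ℝ univ G) :
    ∃ m, ∀ x y, ∀ z ∈ segment ℝ x y, min (min (G x) (G y)) m ≤ G z := by
  by_cases hmin : ∃ t, ∀ s, G t ≤ G s
  · obtain ⟨t, ht⟩ := hmin
    exact ⟨G t, fun x y z _ => min_le_of_right_le (ht z)⟩
  refine ⟨0, fun x y z hz => min_le_of_left_le ?_⟩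
  by_contra! hlt
  rw [segment_eq_Icc'] at hz
  have hcont : Continuous G := continuousOn_univ.1 (hG.continuousOn isOpen_univ)
  obtain ⟨t, ht, htmin⟩ := isCompact_Icc.exists_isMinOn ⟨z, hz⟩ hcont.continuousOn
  have hGt : G t < min (G x) (G y) := (htmin hz).trans_lt hlt
  have hne : ∀ e, e = x ∨ e = y → e ≠ t := by
    rintro e (rfl | rfl) rfl
    · exact (min_le_left _ _).not_gt hGt
    · exact (min_le_right _ _).not_gt hGt
  have hlocal : IsLocalMin G t :=
    htmin.isLocalMin (Icc_mem_nhds (ht.1.lt_of_ne (hne _ (min_choice x y)))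
      (ht.2.lt_of_ne (hne _ (max_choice x y)).symm))
  exact hmin ⟨t, IsMinOn.of_isLocalMin_of_convex_univ hlocal hG⟩

lemma ConvexOn.exists_abs_le_of_mem_segment {G : ℝ → ℝ} (hG : ConvexOn ℝ univ G) :
    ∃ K, ∀ x y, ∀ z ∈ segment ℝ x y, |G z| ≤ |G x| + |G y| + K := by
  obtain ⟨m, hm⟩ := hG.exists_min_le_of_mem_segment
  refine ⟨|m|, fun x y z hz => abs_le.2 ⟨(le_min (le_min ?_ ?_) ?_).trans (hm x y z hz),
    (hG.le_max_of_mem_segment (mem_univ x) (mem_univ y) hz).trans (max_le ?_ ?_)⟩⟩ <;>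
  linarith [abs_nonneg (G x), abs_nonneg (G y), abs_nonneg m, neg_abs_le (G x),
    neg_abs_le (G y), neg_abs_le m, le_abs_self (G x), le_abs_self (G y)]

section CostOfCombination

variable {α : Type*} [MeasurableSpace α] {μ : Measure α} {G : ℝ → ℝ} {X Y : α → ℝ} {s t : ℝ}

lemma ConvexOn.integrable_comp_combination [IsFiniteMeasure μ] (hG : ConvexOn ℝ univ G)
    (hX : AEStronglyMeasurable X μ) (hY : AEStronglyMeasurable Y μ)
    (hGX : Integrable (fun ω => G (X ω)) μ) (hGY : Integrable (fun ω => G (Y ω)) μ)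
    (hs : 0 ≤ s) (ht : 0 ≤ t) (hst : s + t = 1) :
    Integrable (fun ω => G (s * X ω + t * Y ω)) μ := by
  obtain ⟨K, hK⟩ := hG.exists_abs_le_of_mem_segment
  have hcont : Continuous G := continuousOn_univ.1 (hG.continuousOn isOpen_univ)
  refine ((hGX.abs.add hGY.abs).add (integrable_const K)).mono'
    (hcont.comp_aestronglyMeasurable ((hX.const_mul s).add (hY.const_mul t)))
    (ae_of_all _ fun ω => ?_)
  exact hK (X ω) (Y ω) _ ⟨s, t, hs, ht, hst, rfl⟩

lemma ConvexOn.integral_comp_combination_le (hG : ConvexOn ℝ univ G)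
    (hGX : Integrable (fun ω => G (X ω)) μ) (hGY : Integrable (fun ω => G (Y ω)) μ)
    (hGXY : Integrable (fun ω => G (s * X ω + t * Y ω)) μ)
    (hs : 0 ≤ s) (ht : 0 ≤ t) (hst : s + t = 1) :
    ∫ ω, G (s * X ω + t * Y ω) ∂μ ≤ s * ∫ ω, G (X ω) ∂μ + t * ∫ ω, G (Y ω) ∂μ := by
  rw [← integral_const_mul, ← integral_const_mul,
    ← integral_add (hGX.const_mul s) (hGY.const_mul t)]
  exact integral_mono hGXY ((hGX.const_mul s).add (hGY.const_mul t))
    fun ω => hG.2 (mem_univ _) (mem_univ _) hs ht hst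

end CostOfCombination

lemma Real.abs_log_le_max_of_mem_segment {u v w : ℝ} (hu : 0 < u) (hv : 0 < v)
    (hw : w ∈ segment ℝ u v) : |log w| ≤ max |log u| |log v| := by
  wlog huv : u ≤ v generalizing u v
  · rw [max_comm]
    exact this hv hu (segment_symm ℝ u v ▸ hw) (le_of_not_ge huv)
  rw [segment_eq_Icc huv] at hw
  exact abs_le_max_abs_abs (log_le_log hu hw.1) (log_le_log (hu.trans_le hw.1) hw.2)

lemma aemeasurable_of_ae_hasDerivAt {μ : Measure ℝ} {f f' : ℝ → ℝ}
    (hf : ∀ᵐ x ∂μ, HasDerivAt f (f' x) x) : AEMeasurable f' μ :=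
  (measurable_deriv f).aemeasurable.congr (hf.mono fun _ hx => hx.deriv)

section EntropyOfCombination

variable {α : Type*} [MeasurableSpace α] {μ : Measure α} {p u v : α → ℝ} {s t : ℝ}

lemma integrable_mul_log_of_integrable_mul_abs_log (h : Integrable (fun x => p x * |log (u x)|) μ)
    (hp : AEStronglyMeasurable p μ) (hu : AEMeasurable u μ) :
    Integrable (fun x => p x * log (u x)) μ :=
  h.mono (hp.mul (measurable_log.comp_aemeasurable hu).aestronglyMeasurable)
    (ae_of_all _ fun x => by simp only [norm_mul, norm_eq_abs, abs_abs, le_refl])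

lemma integrable_mul_abs_log_combination (hp : AEStronglyMeasurable p μ)
    (hu : AEMeasurable u μ) (hv : AEMeasurable v μ)
    (hu₀ : ∀ᵐ x ∂μ, 0 < u x) (hv₀ : ∀ᵐ x ∂μ, 0 < v x)
    (hpu : Integrable (fun x => p x * |log (u x)|) μ)
    (hpv : Integrable (fun x => p x * |log (v x)|) μ)
    (hs : 0 ≤ s) (ht : 0 ≤ t) (hst : s + t = 1) :
    Integrable (fun x => p x * |log (s * u x + t * v x)|) μ := by
  refine (hpu.norm.add hpv.norm).mono' (hp.mul (measurable_log.comp_aemeasurable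
    ((hu.const_mul s).add (hv.const_mul t))).abs.aestronglyMeasurable) ?_
  filter_upwards [hu₀, hv₀] with x hux hvx
  have hlog := Real.abs_log_le_max_of_mem_segment (w := s * u x + t * v x) hux hvx
    ⟨s, t, hs, ht, hst, rfl⟩
  have hmax := max_le_add_of_nonneg (abs_nonneg (log (u x))) (abs_nonneg (log (v x)))
  simp only [Pi.add_apply, norm_mul, norm_eq_abs, abs_abs, ← mul_add]
  exact mul_le_mul_of_nonneg_left (hlog.trans hmax) (abs_nonneg _)

lemma integral_mul_log_concave (hp : AEStronglyMeasurable p μ) (hp₀ : ∀ᵐ x ∂μ, 0 ≤ p x)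
    (hu : AEMeasurable u μ) (hv : AEMeasurable v μ)
    (hu₀ : ∀ᵐ x ∂μ, 0 < u x) (hv₀ : ∀ᵐ x ∂μ, 0 < v x)
    (hpu : Integrable (fun x => p x * |log (u x)|) μ)
    (hpv : Integrable (fun x => p x * |log (v x)|) μ)
    (hs : 0 ≤ s) (ht : 0 ≤ t) (hst : s + t = 1) :
    s * ∫ x, p x * log (u x) ∂μ + t * ∫ x, p x * log (v x) ∂μ ≤
      ∫ x, p x * log (s * u x + t * v x) ∂μ := by
  have hpu' := integrable_mul_log_of_integrable_mul_abs_log hpu hp hu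
  have hpv' := integrable_mul_log_of_integrable_mul_abs_log hpv hp hv
  have hpw := integrable_mul_log_of_integrable_mul_abs_log
    (integrable_mul_abs_log_combination hp hu hv hu₀ hv₀ hpu hpv hs ht hst) hp
    ((hu.const_mul s).add (hv.const_mul t))
  rw [← integral_const_mul, ← integral_const_mul,
    ← integral_add (hpu'.const_mul s) (hpv'.const_mul t)]
  refine integral_mono_ae ((hpu'.const_mul s).add (hpv'.const_mul t)) hpw ?_
  filter_upwards [hp₀, hu₀, hv₀] with x hpx hux hvx
  have hconc := strictConcaveOn_log_Ioi.concaveOn.2 (mem_Ioi.2 hux) (mem_Ioi.2 hvx) hs ht hst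
  simp only [smul_eq_mul] at hconc
  calc s * (p x * log (u x)) + t * (p x * log (v x))
      = p x * (s * log (u x) + t * log (v x)) := by ring
    _ ≤ p x * log (s * u x + t * v x) := mul_le_mul_of_nonneg_left hconc hpx

end EntropyOfCombination

theorem entropy_functional_concavity_general
    {Ω : Type*} [MeasureSpace Ω]
    (a b : EReal) (N : Ω → ℝ) (pN G : ℝ → ℝ) (β : ℝ)
    (hN : IsNoise a b N pN) (hG : IsCost G)
    (g₁ g₂ g₁' g₂' : ℝ → ℝ)
    (hmeas₁ : Measurable g₁) (hmeas₂ : Measurable g₂)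
    (hd₁ : ∀ᵐ n ∂(volume.restrict (eIoo a b)), HasDerivAt g₁ (g₁' n) n ∧ -1 < g₁' n)
    (hd₂ : ∀ᵐ n ∂(volume.restrict (eIoo a b)), HasDerivAt g₂ (g₂' n) n ∧ -1 < g₂' n)
    (hc₁ : Integrable (fun ω => G (g₁ (N ω))) (ℙ : Measure Ω) ∧
      (∫ ω, G (g₁ (N ω)) ∂(ℙ : Measure Ω)) ≤ β)
    (hc₂ : Integrable (fun ω => G (g₂ (N ω))) (ℙ : Measure Ω) ∧
      (∫ ω, G (g₂ (N ω)) ∂(ℙ : Measure Ω)) ≤ β)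
    (hi₁ : IntegrableOn (fun n => pN n * |Real.log (1 + g₁' n)|) (eIoo a b))
    (hi₂ : IntegrableOn (fun n => pN n * |Real.log (1 + g₂' n)|) (eIoo a b))
    (α₁ α₂ : ℝ) (hα₁ : 0 < α₁) (hα₂ : 0 < α₂) (hsum : α₁ + α₂ = 1) :
    (∀ᵐ n ∂(volume.restrict (eIoo a b)),
      HasDerivAt (fun x => α₁ * g₁ x + α₂ * g₂ x) (α₁ * g₁' n + α₂ * g₂' n) n ∧
      -1 < α₁ * g₁' n + α₂ * g₂' n) ∧
    (Integrable (fun ω => G (α₁ * g₁ (N ω) + α₂ * g₂ (N ω))) (ℙ : Measure Ω) ∧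
      (∫ ω, G (α₁ * g₁ (N ω) + α₂ * g₂ (N ω)) ∂(ℙ : Measure Ω)) ≤ β) ∧
    IntegrableOn (fun n => pN n * |Real.log (1 + (α₁ * g₁' n + α₂ * g₂' n))|) (eIoo a b) ∧
    α₁ * (∫ n in eIoo a b, pN n * Real.log (1 + g₁' n)) +
        α₂ * (∫ n in eIoo a b, pN n * Real.log (1 + g₂' n)) ≤
      ∫ n in eIoo a b, pN n * Real.log (1 + (α₁ * g₁' n + α₂ * g₂' n)) := by
  have := hN.prob
  obtain ⟨hNm, hpm, hp₀, -⟩ := hN.dens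
  refine ⟨?_, ?_, ?_⟩
  · filter_upwards [hd₁, hd₂] with n h₁ h₂
    exact ⟨(h₁.1.const_mul α₁).add (h₂.1.const_mul α₂), by nlinarith [h₁.2, h₂.2]⟩
  · have hint := hG.convex.integrable_comp_combination (X := fun ω => g₁ (N ω))
      (Y := fun ω => g₂ (N ω)) (hmeas₁.comp hNm).aestronglyMeasurable
      (hmeas₂.comp hNm).aestronglyMeasurable hc₁.1 hc₂.1 hα₁.le hα₂.le hsum
    exact ⟨hint, (hG.convex.integral_comp_combination_le hc₁.1 hc₂.1 hint hα₁.le hα₂.le hsum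
      ).trans (convex_Iic β hc₁.2 hc₂.2 hα₁.le hα₂.le hsum)⟩
  have hshift : ∀ n, 1 + (α₁ * g₁' n + α₂ * g₂' n) = α₁ * (1 + g₁' n) + α₂ * (1 + g₂' n) :=
    fun n => by linear_combination -hsum
  simp only [hshift]
  have hu : AEMeasurable (fun n => 1 + g₁' n) (volume.restrict (eIoo a b)) :=
    aemeasurable_const.add (aemeasurable_of_ae_hasDerivAt (hd₁.mono fun _ h => h.1))
  have hv : AEMeasurable (fun n => 1 + g₂' n) (volume.restrict (eIoo a b)) :=
    aemeasurable_const.add (aemeasurable_of_ae_hasDerivAt (hd₂.mono fun _ h => h.1))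
  have hu₀ : ∀ᵐ n ∂(volume.restrict (eIoo a b)), 0 < 1 + g₁' n :=
    hd₁.mono fun _ h => by linarith [h.2]
  have hv₀ : ∀ᵐ n ∂(volume.restrict (eIoo a b)), 0 < 1 + g₂' n :=
    hd₂.mono fun _ h => by linarith [h.2]
  have hp : AEStronglyMeasurable pN (volume.restrict (eIoo a b)) := hpm.aestronglyMeasurable
  exact ⟨integrable_mul_abs_log_combination hp hu hv hu₀ hv₀ hi₁ hi₂ hα₁.le hα₂.le hsum,
    integral_mul_log_concave hp (ae_of_all _ hp₀) hu hv hu₀ hv₀ hi₁ hi₂ hα₁.le hα₂.le hsum⟩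

/-- concavity of the constrained entropy functional: a convex
combination of two admissible curves is again admissible (a.e. differentiable with
derivative `> −1`, average cost at most `β` and finite entropy integral), and the
entropy functional is concave:
`∫ p_N ln(1 + α₁g₁' + α₂g₂') ≥ α₁ ∫ p_N ln(1+g₁') + α₂ ∫ p_N ln(1+g₂')`. -/
theorem entropy_functional_concavity
    {Ω : Type*} [MeasureSpace Ω]
    (a b : EReal) (N : Ω → ℝ) (pN G : ℝ → ℝ) (β : ℝ)
    (hN : IsNoise a b N pN) (hG : IsCost G) (hβ : InIG G β)
    (g₁ g₂ g₁' g₂' : ℝ → ℝ)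
    (hmeas₁ : Measurable g₁) (hmeas₂ : Measurable g₂)
    (hd₁ : ∀ᵐ n ∂(volume.restrict (eIoo a b)), HasDerivAt g₁ (g₁' n) n ∧ -1 < g₁' n)
    (hd₂ : ∀ᵐ n ∂(volume.restrict (eIoo a b)), HasDerivAt g₂ (g₂' n) n ∧ -1 < g₂' n)
    (hc₁ : Integrable (fun ω => G (g₁ (N ω))) (ℙ : Measure Ω) ∧
      (∫ ω, G (g₁ (N ω)) ∂(ℙ : Measure Ω)) ≤ β)
    (hc₂ : Integrable (fun ω => G (g₂ (N ω))) (ℙ : Measure Ω) ∧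
      (∫ ω, G (g₂ (N ω)) ∂(ℙ : Measure Ω)) ≤ β)
    (hi₁ : IntegrableOn (fun n => pN n * |Real.log (1 + g₁' n)|) (eIoo a b))
    (hi₂ : IntegrableOn (fun n => pN n * |Real.log (1 + g₂' n)|) (eIoo a b))
    (α₁ α₂ : ℝ) (hα₁ : 0 < α₁) (hα₂ : 0 < α₂) (hsum : α₁ + α₂ = 1) :
    (∀ᵐ n ∂(volume.restrict (eIoo a b)),
      HasDerivAt (fun x => α₁ * g₁ x + α₂ * g₂ x) (α₁ * g₁' n + α₂ * g₂' n) n ∧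
      -1 < α₁ * g₁' n + α₂ * g₂' n) ∧
    (Integrable (fun ω => G (α₁ * g₁ (N ω) + α₂ * g₂ (N ω))) (ℙ : Measure Ω) ∧
      (∫ ω, G (α₁ * g₁ (N ω) + α₂ * g₂ (N ω)) ∂(ℙ : Measure Ω)) ≤ β) ∧
    IntegrableOn (fun n => pN n * |Real.log (1 + (α₁ * g₁' n + α₂ * g₂' n))|) (eIoo a b) ∧
    α₁ * (∫ n in eIoo a b, pN n * Real.log (1 + g₁' n)) +
        α₂ * (∫ n in eIoo a b, pN n * Real.log (1 + g₂' n)) ≤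
      ∫ n in eIoo a b, pN n * Real.log (1 + (α₁ * g₁' n + α₂ * g₂' n)) :=
  entropy_functional_concavity_general a b N pN G β hN hG g₁ g₂ g₁' g₂' hmeas₁ hmeas₂ hd₁ hd₂ hc₁
    hc₂ hi₁ hi₂ α₁ α₂ hα₁ hα₂ hsum
end
end

section
/- Let μ be a probability measure on ℝ, let G : ℝ → ℝ be convex and continuous and suppose there exist p, q, r ∈ ℝ with p > 0 such that p x² + q x + r ≤ G(x) for all x ∈ ℝ, and let α ∈ ℝ. Then the constraint set D_α := { g ∈ L²(μ) : ∫ G(g) dμ ≤ α } is norm-bounded in L²(μ) and weakly sequentially compact: every sequence (g_i) ⊆ D_α has a subsequence converging weakly in L²(μ) to some g ∈ D_α (in particular ∫ G(g) dμ ≤ α for the weak limit). -/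
/-!
The quadratic lower bound on `G` bounds `‖g‖²` on `D_α`, so a sequence in `D_α` has a weakly
convergent subsequence (sequential Banach–Alaoglu on the separable closed span of the sequence,
identified with its dual by Riesz). Jensen makes `D_α` convex and Fatou's lemma, along an a.e.
convergent subsequence, makes it norm closed; by Hahn–Banach a closed convex set contains the weak
limits of its sequences.
-/

open MeasureTheory Filter
open scoped Topology ENNReal RealInnerProductSpace

section Hilbert

variable {E : Type*} [NormedAddCommGroup E] [InnerProductSpace ℝ E] [CompleteSpace E]

theorem exists_subseq_tendsto_inner_of_norm_le {u : ℕ → E} {C : ℝ} (hu : ∀ i, ‖u i‖ ≤ C) :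
    ∃ φ : ℕ → ℕ, StrictMono φ ∧ ∃ g : E, ∀ ψ : E,
      Tendsto (fun k => ⟪u (φ k), ψ⟫) atTop (𝓝 ⟪g, ψ⟫) := by
  set K := (Submodule.span ℝ (Set.range u)).topologicalClosure
  have hK : TopologicalSpace.IsSeparable (K : Set E) := by
    rw [Submodule.topologicalClosure_coe]
    exact (Set.countable_range u).isSeparable.span.closure
  have := hK.separableSpace
  have huK : ∀ i, u i ∈ K := fun i =>
    Submodule.le_topologicalClosure _ (Submodule.subset_span ⟨i, rfl⟩)
  let ℓ : ℕ → WeakDual ℝ K := fun i => innerSL ℝ (⟨u i, huK i⟩ : K)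
  have hℓ : ∀ i, ℓ i ∈ WeakDual.toStrongDual ⁻¹' Metric.closedBall 0 C := fun i =>
    (dist_zero_right (innerSL ℝ (⟨u i, huK i⟩ : K))).trans_le
      ((innerSL_apply_norm ℝ _).trans_le (hu i))
  obtain ⟨ℓ₀, -, φ, hφ, hlim⟩ := WeakDual.isSeqCompact_closedBall ℝ K 0 C hℓ
  refine ⟨φ, hφ, ((InnerProductSpace.toDual ℝ K).symm (WeakDual.toStrongDual ℓ₀) : E),
    fun ψ => ?_⟩
  -- Each `u i` lies in `K`, so pairing it with `ψ` is pairing it with the projection of `ψ`.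
  have hpair := (tendsto_iff_forall_eval_tendsto_topDualPairing.mp hlim)
    (K.orthogonalProjectionOnto ψ)
  rw [← Submodule.inner_orthogonalProjectionOnto_eq_of_mem_left,
    InnerProductSpace.toDual_symm_apply]
  convert hpair using 2 with k
  · exact (Submodule.inner_orthogonalProjectionOnto_eq_of_mem_left ⟨u (φ k), huK _⟩ ψ).symm
  · rfl

theorem Convex.mem_of_forall_tendsto_inner {S : Set E} (hS : Convex ℝ S) (hSc : IsClosed S)
    {v : ℕ → E} (hv : ∀ k, v k ∈ S) {g : E}
    (hg : ∀ ψ, Tendsto (fun k => ⟪v k, ψ⟫) atTop (𝓝 ⟪g, ψ⟫)) : g ∈ S := by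
  by_contra hgS
  obtain ⟨f, u, hfS, hfg⟩ := geometric_hahn_banach_closed_point hS hSc hgS
  have hlim : Tendsto (fun k => f (v k)) atTop (𝓝 (f g)) := by
    simpa only [real_inner_comm ((InnerProductSpace.toDual ℝ E).symm f),
      InnerProductSpace.toDual_symm_apply] using hg ((InnerProductSpace.toDual ℝ E).symm f)
  exact (le_of_tendsto' hlim fun k => (hfS _ (hv k)).le).not_gt hfg

end Hilbert

section ConstraintSet

variable {X : Type*} [MeasurableSpace X] {μ : Measure X}

theorem integrable_and_integral_le_of_tendsto_ae {f : ℕ → X → ℝ} {F : X → ℝ} {β : ℝ}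
    (hf_nonneg : ∀ n, 0 ≤ᵐ[μ] f n) (hf_int : ∀ n, Integrable (f n) μ)
    (hf_le : ∀ n, ∫ x, f n x ∂μ ≤ β)
    (hlim : ∀ᵐ x ∂μ, Tendsto (fun n => f n x) atTop (𝓝 (F x))) :
    Integrable F μ ∧ ∫ x, F x ∂μ ≤ β := by
  have hF_meas : AEStronglyMeasurable F μ :=
    aestronglyMeasurable_of_tendsto_ae _ (fun n => (hf_int n).1) hlim
  have hF_nonneg : 0 ≤ᵐ[μ] F := by
    filter_upwards [hlim, ae_all_iff.mpr hf_nonneg] with x hx hx0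
    exact ge_of_tendsto' hx hx0
  have hβ : 0 ≤ β := (integral_nonneg_of_ae (hf_nonneg 0)).trans (hf_le 0)
  have hfatou : ∫⁻ x, ENNReal.ofReal (F x) ∂μ ≤ ENNReal.ofReal β :=
    calc ∫⁻ x, ENNReal.ofReal (F x) ∂μ
        = ∫⁻ x, liminf (fun n => ENNReal.ofReal (f n x)) atTop ∂μ := by
          refine lintegral_congr_ae ?_
          filter_upwards [hlim] with x hx
          exact ((ENNReal.continuous_ofReal.tendsto _).comp hx).liminf_eq.symm
      _ ≤ liminf (fun n => ∫⁻ x, ENNReal.ofReal (f n x) ∂μ) atTop :=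
          lintegral_liminf_le' fun n => (hf_int n).1.aemeasurable.ennreal_ofReal
      _ ≤ ENNReal.ofReal β := by
          refine liminf_le_of_frequently_le' (Frequently.of_forall fun n => ?_)
          rw [← ofReal_integral_eq_lintegral_ofReal (hf_int n) (hf_nonneg n)]
          exact ENNReal.ofReal_le_ofReal (hf_le n)
  have hF_int : Integrable F μ :=
    ⟨hF_meas, (hasFiniteIntegral_iff_ofReal hF_nonneg).mpr
      (hfatou.trans_lt ENNReal.ofReal_lt_top)⟩
  refine ⟨hF_int, ?_⟩
  rw [integral_eq_lintegral_of_nonneg_ae hF_nonneg hF_meas]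
  exact ENNReal.toReal_le_of_le_ofReal hβ hfatou

def constraintSet (G : ℝ → ℝ) (α : ℝ) (p : ℝ≥0∞) (μ : Measure X) : Set (Lp ℝ p μ) :=
  {g | Integrable (fun x => G (g x)) μ ∧ ∫ x, G (g x) ∂μ ≤ α}

variable {G : ℝ → ℝ} {α : ℝ} {p : ℝ≥0∞}

theorem isClosed_constraintSet [IsFiniteMeasure μ] [Fact (1 ≤ p)] (hG : Continuous G)
    (hG_bdd : BddBelow (Set.range G)) : IsClosed (constraintSet G α p μ) := by
  obtain ⟨c, hc⟩ := hG_bdd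
  have hGc : ∀ y, c ≤ G y := fun y => hc ⟨y, rfl⟩
  refine IsSeqClosed.isClosed fun gs g hgs hlim => ?_
  obtain ⟨ρ, -, hρ⟩ := (tendstoInMeasure_of_tendsto_Lp hlim).exists_seq_tendsto_ae
  have hshift := integrable_and_integral_le_of_tendsto_ae (μ := μ)
    (f := fun n x => G (gs (ρ n) x) - c) (F := fun x => G (g x) - c) (β := α - μ.real Set.univ • c)
    (fun n => Eventually.of_forall fun x => sub_nonneg.mpr (hGc _))
    (fun n => (hgs (ρ n)).1.sub (integrable_const c))
    (fun n => by
      rw [integral_sub (hgs (ρ n)).1 (integrable_const c), integral_const]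
      exact sub_le_sub_right (hgs (ρ n)).2 _)
    (by
      filter_upwards [hρ] with x hx
      exact ((hG.tendsto _).comp hx).sub tendsto_const_nhds)
  have hint : Integrable (fun x => G (g x)) μ :=
    (hshift.1.add (integrable_const c)).congr (.of_forall fun x => sub_add_cancel _ _)
  refine ⟨hint, ?_⟩
  have := hshift.2
  rw [integral_sub hint (integrable_const c), integral_const] at this
  linarith

theorem convex_constraintSet [IsFiniteMeasure μ] [Fact (1 ≤ p)]
    (hG_conv : ConvexOn ℝ Set.univ G) (hG : Continuous G) (hG_bdd : BddBelow (Set.range G)) :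
    Convex ℝ (constraintSet G α p μ) := by
  obtain ⟨c, hc⟩ := hG_bdd
  intro g₁ hg₁ g₂ hg₂ a b ha hb hab
  have hcoe : ⇑(a • g₁ + b • g₂) =ᵐ[μ] fun x => a • g₁ x + b • g₂ x := by
    filter_upwards [Lp.coeFn_add (a • g₁) (b • g₂), Lp.coeFn_smul a g₁, Lp.coeFn_smul b g₂]
      with x h h₁ h₂
    rw [h, Pi.add_apply, h₁, h₂, Pi.smul_apply, Pi.smul_apply]
  have hjensen : (fun x => G ((a • g₁ + b • g₂) x)) ≤ᵐ[μ]
      fun x => a * G (g₁ x) + b * G (g₂ x) := by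
    filter_upwards [hcoe] with x hx
    rw [hx]
    exact hG_conv.2 (Set.mem_univ _) (Set.mem_univ _) ha hb hab
  have hupper : Integrable (fun x => a * G (g₁ x) + b * G (g₂ x)) μ :=
    (hg₁.1.const_mul a).add (hg₂.1.const_mul b)
  have hint : Integrable (fun x => G ((a • g₁ + b • g₂) x)) μ :=
    integrable_of_le_of_le (hG.comp_aestronglyMeasurable (Lp.aestronglyMeasurable _))
      (.of_forall fun x => hc ⟨_, rfl⟩) hjensen (integrable_const c) hupper
  refine ⟨hint, ?_⟩
  calc ∫ x, G ((a • g₁ + b • g₂) x) ∂μ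
      ≤ ∫ x, a * G (g₁ x) + b * G (g₂ x) ∂μ := integral_mono_ae hint hupper hjensen
    _ = a * ∫ x, G (g₁ x) ∂μ + b * ∫ x, G (g₂ x) ∂μ := by
        rw [integral_add (hg₁.1.const_mul a) (hg₂.1.const_mul b), integral_const_mul,
          integral_const_mul]
    _ ≤ a * α + b * α := by gcongr; exacts [hg₁.2, hg₂.2]
    _ = α := by rw [← add_mul, hab, one_mul]

theorem half_mul_sq_add_le_quadratic {p q r : ℝ} (hp : 0 < p) (x : ℝ) :
    p / 2 * x ^ 2 + (r - q ^ 2 / (2 * p)) ≤ p * x ^ 2 + q * x + r := by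
  have hsq : 0 ≤ (p * x + q) ^ 2 / (2 * p) := by positivity
  have hgap : p * x ^ 2 + q * x + r - (p / 2 * x ^ 2 + (r - q ^ 2 / (2 * p))) =
      (p * x + q) ^ 2 / (2 * p) := by
    field_simp
    ring
  linarith

theorem MeasureTheory.L2.integral_mul_eq_inner (f g : Lp ℝ 2 μ) : ∫ x, f x * g x ∂μ = ⟪f, g⟫ := by
  simp only [L2.inner_def, RCLike.inner_apply, conj_trivial, mul_comm]

theorem isBounded_constraintSet [IsFiniteMeasure μ] {p q r : ℝ} (hp : 0 < p)
    (hG : ∀ x, p * x ^ 2 + q * x + r ≤ G x) : Bornology.IsBounded (constraintSet G α 2 μ) := by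
  set c := r - q ^ 2 / (2 * p)
  refine isBounded_iff_forall_norm_le.mpr ⟨√(2 / p * (α - μ.real Set.univ * c)), fun g hg => ?_⟩
  have hg_sq : Integrable (fun x => g x ^ 2) μ := (Lp.memLp g).integrable_sq
  have hnorm : ∫ x, g x ^ 2 ∂μ = ‖g‖ ^ 2 := by
    simp only [sq, L2.integral_mul_eq_inner, real_inner_self_eq_norm_mul_norm]
  have hle : p / 2 * ‖g‖ ^ 2 + μ.real Set.univ * c ≤ α :=
    calc p / 2 * ‖g‖ ^ 2 + μ.real Set.univ * c = ∫ x, p / 2 * g x ^ 2 + c ∂μ := by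
          rw [integral_add (hg_sq.const_mul _) (integrable_const c), integral_const_mul,
            integral_const, hnorm, smul_eq_mul]
      _ ≤ ∫ x, G (g x) ∂μ := integral_mono ((hg_sq.const_mul _).add (integrable_const c)) hg.1
          fun x => (half_mul_sq_add_le_quadratic hp _).trans (hG _)
      _ ≤ α := hg.2
  refine Real.le_sqrt_of_sq_le ?_
  calc ‖g‖ ^ 2 = 2 / p * (p / 2 * ‖g‖ ^ 2) := by field_simp
    _ ≤ 2 / p * (α - μ.real Set.univ * c) := by gcongr; linarith

end ConstraintSet

/-- for a probability measure `μ`, a continuous convex cost `G`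
dominating a quadratic with positive leading coefficient, and any level `α`, the
constraint set `D_α = {g ∈ L²(μ) : ∫ G(g) dμ ≤ α}` is norm-bounded and weakly
sequentially compact in `L²(μ)`: every sequence in `D_α` has a subsequence converging
weakly in `L²(μ)` to an element of `D_α`. -/
theorem constraint_set_weakly_compact
    {X : Type*} [MeasurableSpace X] (μ : Measure X) [IsProbabilityMeasure μ]
    (G : ℝ → ℝ) (hGconv : ConvexOn ℝ Set.univ G) (hGcont : Continuous G)
    (p q r : ℝ) (hp : 0 < p) (hquad : ∀ x, p * x ^ 2 + q * x + r ≤ G x)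
    (α : ℝ) :
    (∃ M : ℝ, ∀ g : Lp ℝ 2 μ,
      (Integrable (fun x => G (g x)) μ ∧ (∫ x, G (g x) ∂μ) ≤ α) → ‖g‖ ≤ M) ∧
    (∀ gs : ℕ → Lp ℝ 2 μ,
      (∀ i, Integrable (fun x => G (gs i x)) μ ∧ (∫ x, G (gs i x) ∂μ) ≤ α) →
      ∃ (φ : ℕ → ℕ) (g : Lp ℝ 2 μ), StrictMono φ ∧
        (Integrable (fun x => G (g x)) μ ∧ (∫ x, G (g x) ∂μ) ≤ α) ∧
        ∀ ψ : Lp ℝ 2 μ,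
          Tendsto (fun k => ∫ x, gs (φ k) x * ψ x ∂μ) atTop
            (𝓝 (∫ x, g x * ψ x ∂μ))) := by
  obtain ⟨M, hM⟩ := isBounded_iff_forall_norm_le.mp
    (isBounded_constraintSet (μ := μ) (α := α) hp hquad)
  have hG_bdd : BddBelow (Set.range G) :=
    ⟨r - q ^ 2 / (2 * p), by
      rintro _ ⟨x, rfl⟩
      exact (le_add_of_nonneg_left (by positivity)).trans
        ((half_mul_sq_add_le_quadratic hp x).trans (hquad x))⟩
  refine ⟨⟨M, hM⟩, fun gs hgs => ?_⟩
  obtain ⟨φ, hφ, g, hg⟩ := exists_subseq_tendsto_inner_of_norm_le fun i => hM _ (hgs i)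
  have hconv : Convex ℝ (constraintSet G α 2 μ) := convex_constraintSet hGconv hGcont hG_bdd
  have hcl : IsClosed (constraintSet G α 2 μ) := isClosed_constraintSet hGcont hG_bdd
  have hgD : g ∈ constraintSet G α 2 μ :=
    hconv.mem_of_forall_tendsto_inner hcl (fun k => hgs (φ k)) hg
  refine ⟨φ, g, hφ, hgD, fun ψ => ?_⟩
  simpa only [L2.integral_mul_eq_inner] using hg ψ
end

section
/- Let N ~ 𝒩(0, σ_N²) be a centered Gaussian random variable with σ_N ∈ (0,∞), let G(x) = x² and let β ∈ (0,∞). Then for every random variable X defined on the same probability space as N with E|X| < ∞, E X² ≤ β, and such that X+N has a law absolutely continuous with respect to Lebesgue measure with well-defined differential entropy, one has h(X+N) ≤ (1/2)·ln(2πe·(σ_N+√β)²), and equality is attained by the (fully dependent) input X† = (√β/σ_N)·N, for which X† ~ 𝒩(0,β), E (X†)² = β and Y† = X†+N ~ 𝒩(0, (σ_N+√β)²). In particular sup{h(Y): Y ∈ Σ(N;G,β)} = (1/2)·ln(2πe·(σ_N+√β)²). -/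
open MeasureTheory Real Filter Set
open scoped ENNReal Topology ProbabilityTheory

noncomputable section

variable {Ω : Type*} [MeasureSpace Ω]

/-!
For any coupling of `X` and `N`, Minkowski's inequality gives
`E (X + N)² ≤ (√(E X²) + σ)² ≤ (σ + √β)²`, and Gibbs' inequality against the centred Gaussian
density of variance `V` shows that a density with second moment at most `V` has entropy at most
`(1/2) ln (2πeV)`. The fully dependent input `X† = (√β/σ) N` turns the output into
`(1 + √β/σ) N`, a Gaussian of variance exactly `(σ + √β)²`, so the bound is attained.
-/

open ProbabilityTheory
open scoped NNReal

section WithDensity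

variable {α : Type*} [MeasurableSpace α] {μ : Measure α} {p : α → ℝ}

lemma integrable_withDensity_ofReal_iff (hp : Measurable p) (hp0 : ∀ x, 0 ≤ p x) {g : α → ℝ} :
    Integrable g (μ.withDensity fun x => ENNReal.ofReal (p x)) ↔
      Integrable (fun x => g x * p x) μ := by
  rw [integrable_withDensity_iff hp.ennreal_ofReal (ae_of_all _ fun _ => ENNReal.ofReal_lt_top)]
  simp only [ENNReal.toReal_ofReal (hp0 _)]

lemma integral_withDensity_ofReal (hp : Measurable p) (hp0 : ∀ x, 0 ≤ p x) (g : α → ℝ) :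
    ∫ x, g x ∂(μ.withDensity fun x => ENNReal.ofReal (p x)) = ∫ x, g x * p x ∂μ := by
  rw [integral_withDensity_eq_integral_toReal_smul hp.ennreal_ofReal
    (ae_of_all _ fun _ => ENNReal.ofReal_lt_top)]
  simp only [ENNReal.toReal_ofReal (hp0 _), smul_eq_mul, mul_comm]

end WithDensity

namespace HasDens

variable {Z : Ω → ℝ} {p : ℝ → ℝ}

lemma integrable_comp_iff (h : HasDens Z p) {g : ℝ → ℝ} (hg : Measurable g) :
    Integrable (fun ω => g (Z ω)) ℙ ↔ Integrable fun x => g x * p x := by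
  obtain ⟨hZ, hp, hp0, hlaw⟩ := h
  rw [← integrable_withDensity_ofReal_iff hp hp0, ← hlaw]
  exact (integrable_map_measure hg.aestronglyMeasurable hZ.aemeasurable).symm

lemma integral_comp (h : HasDens Z p) {g : ℝ → ℝ} (hg : Measurable g) :
    ∫ ω, g (Z ω) ∂ℙ = ∫ x, g x * p x := by
  obtain ⟨hZ, hp, hp0, hlaw⟩ := h
  rw [← integral_map hZ.aemeasurable hg.aestronglyMeasurable, hlaw,
    integral_withDensity_ofReal hp hp0]

variable [IsProbabilityMeasure (ℙ : Measure Ω)]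

lemma integrable_density (h : HasDens Z p) : Integrable p := by
  simpa using (h.integrable_comp_iff (g := fun _ => 1) measurable_const).mp (integrable_const 1)

lemma integral_density (h : HasDens Z p) : ∫ x, p x = 1 := by
  simpa using (h.integral_comp (g := fun _ => 1) measurable_const).symm

end HasDens

lemma hasDens_gaussianPDFReal {Z : Ω → ℝ} (hZ : Measurable Z) {v : ℝ≥0} (hv : v ≠ 0)
    (h : Measure.map Z ℙ = gaussianReal 0 v) : HasDens Z (gaussianPDFReal 0 v) :=
  ⟨hZ, measurable_gaussianPDFReal 0 v, gaussianPDFReal_nonneg 0 v, by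
    rw [h, gaussianReal_of_var_ne_zero 0 hv, gaussianPDF_def]⟩

section Gaussian

variable {v : ℝ≥0}

lemma integral_sq_gaussianReal (v : ℝ≥0) : ∫ x, x ^ 2 ∂gaussianReal 0 v = v := by
  rw [← variance_of_integral_eq_zero measurable_id'.aemeasurable integral_id_gaussianReal,
    variance_fun_id_gaussianReal]

lemma integrable_sq_mul_gaussianPDFReal (hv : v ≠ 0) :
    Integrable fun x => x ^ 2 * gaussianPDFReal 0 v x := by
  have h := (memLp_id_gaussianReal (μ := 0) (v := v) 2).integrable_sq
  rwa [gaussianReal_of_var_ne_zero 0 hv, gaussianPDF_def,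
    integrable_withDensity_ofReal_iff (measurable_gaussianPDFReal 0 v)
      (gaussianPDFReal_nonneg 0 v)] at h

lemma integral_sq_mul_gaussianPDFReal (hv : v ≠ 0) :
    ∫ x, x ^ 2 * gaussianPDFReal 0 v x = v := by
  rw [← integral_sq_gaussianReal v, gaussianReal_of_var_ne_zero 0 hv, gaussianPDF_def,
    integral_withDensity_ofReal (measurable_gaussianPDFReal 0 v) (gaussianPDFReal_nonneg 0 v)]

lemma mul_log_gaussianPDFReal (hv : v ≠ 0) (p : ℝ → ℝ) :
    (fun x => p x * Real.log (gaussianPDFReal 0 v x)) =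
      fun x => -(1 / 2) * Real.log (2 * π * v) * p x - (2 * (v : ℝ))⁻¹ * (x ^ 2 * p x) := by
  have hv' : (0 : ℝ) < v := by positivity
  ext x
  rw [gaussianPDFReal, Real.log_mul (by positivity) (exp_ne_zero _), Real.log_inv,
    Real.log_exp, Real.log_sqrt (by positivity)]
  field_simp
  ring

variable {p : ℝ → ℝ}

lemma integrable_mul_log_gaussianPDFReal (hv : v ≠ 0) (hp : Integrable p)
    (hp2 : Integrable fun x => x ^ 2 * p x) :
    Integrable fun x => p x * Real.log (gaussianPDFReal 0 v x) := by
  rw [mul_log_gaussianPDFReal hv]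
  exact (hp.const_mul _).sub (hp2.const_mul _)

lemma integral_mul_log_gaussianPDFReal (hv : v ≠ 0) (hp : Integrable p)
    (hp2 : Integrable fun x => x ^ 2 * p x) :
    ∫ x, p x * Real.log (gaussianPDFReal 0 v x) =
      -(1 / 2) * Real.log (2 * π * v) * (∫ x, p x) - (2 * (v : ℝ))⁻¹ * ∫ x, x ^ 2 * p x := by
  rw [mul_log_gaussianPDFReal hv, integral_sub (hp.const_mul _) (hp2.const_mul _),
    integral_const_mul, integral_const_mul]

lemma entWellDef_gaussianPDFReal (hv : v ≠ 0) : EntWellDef (gaussianPDFReal 0 v) :=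
  integrable_mul_log_gaussianPDFReal hv (integrable_gaussianPDFReal 0 v)
    (integrable_sq_mul_gaussianPDFReal hv)

lemma log_two_pi_exp_one_mul {v : ℝ} (hv : 0 < v) :
    Real.log (2 * π * exp 1 * v) = Real.log (2 * π * v) + 1 := by
  rw [mul_right_comm, Real.log_mul (by positivity) (exp_ne_zero 1), Real.log_exp]

lemma dEnt_gaussianPDFReal (hv : v ≠ 0) :
    dEnt (gaussianPDFReal 0 v) = 1 / 2 * Real.log (2 * π * exp 1 * v) := by
  have hv' : (0 : ℝ) < v := by positivity
  rw [dEnt, integral_mul_log_gaussianPDFReal hv (integrable_gaussianPDFReal 0 v)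
    (integrable_sq_mul_gaussianPDFReal hv), integral_gaussianPDFReal_eq_one 0 hv,
    integral_sq_mul_gaussianPDFReal hv, log_two_pi_exp_one_mul hv']
  field_simp
  ring

end Gaussian

lemma mul_log_sub_mul_log_le {a b : ℝ} (ha : 0 ≤ a) (hb : 0 < b) :
    a * Real.log b - a * Real.log a ≤ b - a := by
  rcases ha.eq_or_lt with rfl | ha
  · simpa using hb.le
  calc a * Real.log b - a * Real.log a = a * Real.log (b / a) := by
        rw [Real.log_div hb.ne' ha.ne']; ring
    _ ≤ a * (b / a - 1) := by gcongr; exact Real.log_le_sub_one_of_pos (by positivity)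
    _ = b - a := by field_simp

section Gibbs

variable {α : Type*} [MeasurableSpace α] {μ : Measure α} {p q : α → ℝ}

lemma integral_mul_log_le_integral_mul_log (hp0 : ∀ x, 0 ≤ p x) (hq0 : ∀ x, 0 < q x)
    (hp : Integrable p μ) (hq : Integrable q μ)
    (hpq : Integrable (fun x => p x * Real.log (q x)) μ)
    (hpp : Integrable (fun x => p x * Real.log (p x)) μ) (hmass : ∫ x, q x ∂μ ≤ ∫ x, p x ∂μ) :
    ∫ x, p x * Real.log (q x) ∂μ ≤ ∫ x, p x * Real.log (p x) ∂μ := by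
  have h := integral_mono (hpq.sub hpp) (hq.sub hp)
    fun x => mul_log_sub_mul_log_le (hp0 x) (hq0 x)
  simp only [Pi.sub_apply] at h
  rw [integral_sub hpq hpp, integral_sub hq hp] at h
  linarith

end Gibbs

lemma dEnt_le_of_integral_sq_le {v : ℝ} (hv : 0 < v) {p : ℝ → ℝ} (hp0 : ∀ x, 0 ≤ p x)
    (hp : Integrable p) (hp1 : ∫ x, p x = 1) (hp2 : Integrable fun x => x ^ 2 * p x)
    (hvar : ∫ x, x ^ 2 * p x ≤ v) (hent : EntWellDef p) :
    dEnt p ≤ 1 / 2 * Real.log (2 * π * exp 1 * v) := by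
  have hw : v.toNNReal ≠ 0 := by simpa using hv
  have gibbs := integral_mul_log_le_integral_mul_log hp0 (gaussianPDFReal_pos 0 _ · hw) hp
    (integrable_gaussianPDFReal 0 _) (integrable_mul_log_gaussianPDFReal hw hp hp2) hent
    (by rw [integral_gaussianPDFReal_eq_one 0 hw, hp1])
  rw [integral_mul_log_gaussianPDFReal hw hp hp2, hp1, Real.coe_toNNReal v hv.le] at gibbs
  have hvar' : (2 * v)⁻¹ * ∫ x, x ^ 2 * p x ≤ 1 / 2 := by
    calc (2 * v)⁻¹ * ∫ x, x ^ 2 * p x ≤ (2 * v)⁻¹ * v := by gcongr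
      _ = 1 / 2 := by field_simp
  rw [dEnt, log_two_pi_exp_one_mul hv]
  linarith

section SecondMoment

variable {α : Type*} [MeasurableSpace α] {μ : Measure α}

lemma integral_add_sq_le {X Y : α → ℝ} (hX : MemLp X 2 μ) (hY : MemLp Y 2 μ) {a b : ℝ}
    (ha : 0 < a) (hb : 0 < b) (hXa : ∫ ω, X ω ^ 2 ∂μ ≤ a ^ 2) (hYb : ∫ ω, Y ω ^ 2 ∂μ ≤ b ^ 2) :
    ∫ ω, (X ω + Y ω) ^ 2 ∂μ ≤ (a + b) ^ 2 := by
  have hX2 := hX.integrable_sq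
  have hY2 := hY.integrable_sq
  -- weighted AM-GM: `a b (x + y)² + (b x - a y)² = (a + b) (b x² + a y²)`
  have h := integral_mono ((hX.add hY).integrable_sq.const_mul (a * b))
    (((hX2.const_mul b).add (hY2.const_mul a)).const_mul (a + b))
    fun ω => show a * b * (X ω + Y ω) ^ 2 ≤ (a + b) * (b * X ω ^ 2 + a * Y ω ^ 2) by
      nlinarith [sq_nonneg (b * X ω - a * Y ω)]
  simp only [Pi.add_apply] at h
  rw [integral_const_mul, integral_const_mul, integral_add (hX2.const_mul b) (hY2.const_mul a),
    integral_const_mul, integral_const_mul] at h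
  refine le_of_mul_le_mul_left ?_ (mul_pos ha hb)
  nlinarith [mul_le_mul_of_nonneg_left hXa hb.le, mul_le_mul_of_nonneg_left hYb ha.le]

variable {N : α → ℝ} (hN : Measurable N)
include hN

lemma memLp_two_of_map_eq_gaussianReal {v : ℝ≥0} (h : μ.map N = gaussianReal 0 v) :
    MemLp N 2 μ :=
  (memLp_map_measure_iff measurable_id.aestronglyMeasurable hN.aemeasurable).mp
    (h ▸ memLp_id_gaussianReal 2)

lemma integral_sq_of_map_eq_gaussianReal {v : ℝ≥0} (h : μ.map N = gaussianReal 0 v) :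
    ∫ ω, N ω ^ 2 ∂μ = v := by
  rw [← integral_sq_gaussianReal v, ← h, integral_map hN.aemeasurable (by fun_prop)]

lemma map_const_mul_eq_gaussianReal {s : ℝ} (h : μ.map N = gaussianReal 0 (s ^ 2).toNNReal)
    (c : ℝ) : μ.map (fun ω => c * N ω) = gaussianReal 0 ((c * s) ^ 2).toNNReal := by
  change μ.map ((c * ·) ∘ N) = _
  rw [← Measure.map_map (measurable_const_mul c) hN, h, gaussianReal_map_const_mul, mul_zero]
  congr 1
  ext
  simp [Real.coe_toNNReal _ (sq_nonneg _), ← mul_pow]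

end SecondMoment

lemma dEnt_le_of_add_of_integral_sq_le [IsProbabilityMeasure (ℙ : Measure Ω)] {X N : Ω → ℝ}
    {p : ℝ → ℝ} (hX : MemLp X 2 ℙ) (hN : MemLp N 2 ℙ) {a b : ℝ} (ha : 0 < a) (hb : 0 < b)
    (hXa : ∫ ω, X ω ^ 2 ∂ℙ ≤ a ^ 2) (hNb : ∫ ω, N ω ^ 2 ∂ℙ ≤ b ^ 2)
    (hY : HasDens (fun ω => X ω + N ω) p) (hp : EntWellDef p) :
    dEnt p ≤ 1 / 2 * Real.log (2 * π * exp 1 * (a + b) ^ 2) := by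
  have hsq : Measurable fun x : ℝ => x ^ 2 := by fun_prop
  have hmom := integral_add_sq_le hX hN ha hb hXa hNb
  rw [hY.integral_comp hsq] at hmom
  exact dEnt_le_of_integral_sq_le (by positivity) hY.2.2.1 hY.integrable_density
    hY.integral_density ((hY.integrable_comp_iff hsq).mp (hX.add hN).integrable_sq) hmom hp

/-- Gaussian noise, quadratic cost: for `N ~ 𝒩(0, σ²)` and power
budget `β > 0`, every (possibly dependent) input with `E X² ≤ β` satisfies
`h(X+N) ≤ (1/2) ln(2πe(σ+√β)²)`, with equality for `X† = (√β/σ)·N`, for which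
`X† ~ 𝒩(0,β)`, `E(X†)² = β` and `Y† = X†+N ~ 𝒩(0,(σ+√β)²)`; in particular
`sup{h(Y) : Y ∈ Σ(N;x²,β)} = (1/2) ln(2πe(σ+√β)²)`. -/
theorem gaussian_noise_quadratic_cost
    {Ω : Type*} [MeasureSpace Ω] [IsProbabilityMeasure (ℙ : Measure Ω)]
    (N : Ω → ℝ) (σ : ℝ) (hσ : 0 < σ)
    (hNmeas : Measurable N)
    (hNlaw : Measure.map N (ℙ : Measure Ω) =
      ProbabilityTheory.gaussianReal 0 (Real.toNNReal (σ ^ 2)))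
    (β : ℝ) (hβ : 0 < β) :
    (∀ (X : Ω → ℝ) (pY : ℝ → ℝ), Measurable X → Integrable X (ℙ : Measure Ω) →
      Integrable (fun ω => (X ω) ^ 2) (ℙ : Measure Ω) →
      (∫ ω, (X ω) ^ 2 ∂(ℙ : Measure Ω)) ≤ β →
      HasDens (fun ω => X ω + N ω) pY → EntWellDef pY →
      dEnt pY ≤ (1 / 2) * Real.log (2 * Real.pi * Real.exp 1 * (σ + Real.sqrt β) ^ 2)) ∧
    Measure.map (fun ω => (Real.sqrt β / σ) * N ω) (ℙ : Measure Ω) =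
      ProbabilityTheory.gaussianReal 0 (Real.toNNReal β) ∧
    (∫ ω, ((Real.sqrt β / σ) * N ω) ^ 2 ∂(ℙ : Measure Ω)) = β ∧
    Measure.map (fun ω => (Real.sqrt β / σ) * N ω + N ω) (ℙ : Measure Ω) =
      ProbabilityTheory.gaussianReal 0 (Real.toNNReal ((σ + Real.sqrt β) ^ 2)) ∧
    (∃ pY : ℝ → ℝ, HasDens (fun ω => (Real.sqrt β / σ) * N ω + N ω) pY ∧
      EntWellDef pY ∧
      dEnt pY = (1 / 2) * Real.log (2 * Real.pi * Real.exp 1 * (σ + Real.sqrt β) ^ 2)) ∧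
    sSup (SigmaEnt N (fun x => x ^ 2) β) =
      (1 / 2) * Real.log (2 * Real.pi * Real.exp 1 * (σ + Real.sqrt β) ^ 2) := by
  have hN2 : MemLp N 2 ℙ := memLp_two_of_map_eq_gaussianReal hNmeas hNlaw
  have hNvar : ∫ ω, N ω ^ 2 ∂ℙ = σ ^ 2 := by
    rw [integral_sq_of_map_eq_gaussianReal hNmeas hNlaw, Real.coe_toNNReal _ (sq_nonneg σ)]
  have hcσ : √β / σ * σ = √β := div_mul_cancel₀ _ hσ.ne'
  have hV : ((σ + √β) ^ 2).toNNReal ≠ 0 := by simp only [ne_eq, Real.toNNReal_eq_zero, not_le]; positivity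
  have upper : ∀ h ∈ SigmaEnt N (fun x => x ^ 2) β,
      h ≤ 1 / 2 * Real.log (2 * π * exp 1 * (σ + √β) ^ 2) := by
    rintro _ ⟨X, pY, ⟨hX, -, hX2, hXβ⟩, hY, hpY, rfl⟩
    rw [add_comm σ]
    exact dEnt_le_of_add_of_integral_sq_le
      ((memLp_two_iff_integrable_sq hX.aestronglyMeasurable).mpr hX2) hN2
      (Real.sqrt_pos.mpr hβ) hσ (by rwa [Real.sq_sqrt hβ.le]) hNvar.le hY hpY
  have hXlaw : Measure.map (fun ω => √β / σ * N ω) ℙ = gaussianReal 0 β.toNNReal := by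
    rw [map_const_mul_eq_gaussianReal hNmeas hNlaw, hcσ, Real.sq_sqrt hβ.le]
  have hXmom : ∫ ω, (√β / σ * N ω) ^ 2 ∂ℙ = β := by
    simp_rw [mul_pow]
    rw [integral_const_mul, hNvar, ← mul_pow, hcσ, Real.sq_sqrt hβ.le]
  have hYlaw : Measure.map (fun ω => √β / σ * N ω + N ω) ℙ =
      gaussianReal 0 ((σ + √β) ^ 2).toNNReal := by
    simp_rw [← add_one_mul (√β / σ)]
    rw [map_const_mul_eq_gaussianReal hNmeas hNlaw, add_one_mul, hcσ, add_comm]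
  have hYdens := hasDens_gaussianPDFReal (by fun_prop) hV hYlaw
  have hYent : dEnt (gaussianPDFReal 0 ((σ + √β) ^ 2).toNNReal) =
      1 / 2 * Real.log (2 * π * exp 1 * (σ + √β) ^ 2) := by
    rw [dEnt_gaussianPDFReal hV, Real.coe_toNNReal _ (sq_nonneg _)]
  have hopt : 1 / 2 * Real.log (2 * π * exp 1 * (σ + √β) ^ 2) ∈ SigmaEnt N (fun x => x ^ 2) β :=
    ⟨_, _, ⟨hNmeas.const_mul _, (hN2.integrable one_le_two).const_mul _,
      (hN2.const_mul _).integrable_sq, hXmom.le⟩, hYdens, entWellDef_gaussianPDFReal hV,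
      hYent.symm⟩
  refine ⟨fun X pY hX hX1 hX2 hXβ hY hpY => upper _ ⟨X, pY, ⟨hX, hX1, hX2, hXβ⟩, hY, hpY, rfl⟩,
    hXlaw, hXmom, hYlaw, ⟨_, hYdens, entWellDef_gaussianPDFReal hV, hYent⟩,
    IsGreatest.csSup_eq ⟨hopt, upper⟩⟩
end
end

section
/- Let N be exponentially distributed with mean μ_N ∈ (0,∞) (density p_N(n) = μ_N^{-1} e^{−n/μ_N} for n ≥ 0), let G(x) = x, and fix β ∈ (0,∞). Then for every random variable X defined on the same probability space as N with X ≥ 0 almost surely, E X ≤ β, and such that X+N has a law absolutely continuous with respect to Lebesgue measure with well-defined differential entropy, one has h(X+N) ≤ ln(e·(μ_N+β)), and equality is attained by the (fully dependent) input X† = (β/μ_N)·N, for which X† is exponential with mean β and Y† = X†+N is exponential with mean μ_N+β. In particular sup{h(Y): Y ∈ Σ(N;G,β,[0,∞))} = ln(e·(μ_N+β)). -/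
open MeasureTheory Real Filter Set
open scoped ENNReal Topology ProbabilityTheory

noncomputable section

variable {Ω : Type*} [MeasureSpace Ω]

/-! Maximum entropy under a mean constraint: for a density `p` on `[0, ∞)` with mean at most `μ`,
Gibbs' inequality against the exponential density `q` of mean `μ` gives
`h(p) ≤ -∫ p log q = log μ + μ⁻¹ ∫ y p(y) dy ≤ log (e μ)`, with equality for `p = q`.
Whatever the coupling of `X ≥ 0` with `N`, the output `X + N` is nonnegative with mean at most
`m + β`, so this bound applies to it; and the fully dependent input `X† = (β / m) N` turns the
output into `((m + β) / m) N`, which is exponential with mean `m + β`. -/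

def expDensity (μ y : ℝ) : ℝ := if 0 ≤ y then μ⁻¹ * exp (-(y / μ)) else 0

lemma expDensity_nonneg {μ : ℝ} (hμ : 0 < μ) (y : ℝ) : 0 ≤ expDensity μ y := by
  unfold expDensity; split <;> positivity

lemma measurable_expDensity (μ : ℝ) : Measurable (expDensity μ) :=
  Measurable.ite measurableSet_Ici ((measurable_id.div_const μ).neg.exp.const_mul _)
    measurable_const

lemma nonneg_of_expDensity_ne_zero {μ y : ℝ} (h : expDensity μ y ≠ 0) : 0 ≤ y := by
  by_contra hy
  exact h (if_neg hy)

lemma rpow_mul_expDensity_eq_indicator (μ a : ℝ) :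
    (fun y => y ^ (a - 1) * expDensity μ y) =
      (Ici 0).indicator (fun y => μ⁻¹ * (y ^ (a - 1) * exp (-(μ⁻¹ * y)))) := by
  funext y
  by_cases hy : 0 ≤ y
  · simp only [expDensity, if_pos hy, indicator_of_mem (show y ∈ Ici 0 from hy), div_eq_inv_mul]
    ring
  · simp [expDensity, hy]

lemma integral_rpow_mul_expDensity {μ a : ℝ} (hμ : 0 < μ) (ha : 0 < a) :
    ∫ y, y ^ (a - 1) * expDensity μ y = μ ^ (a - 1) * Gamma a := by
  rw [rpow_mul_expDensity_eq_indicator, integral_indicator measurableSet_Ici,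
    integral_Ici_eq_integral_Ioi, integral_const_mul,
    integral_rpow_mul_exp_neg_mul_Ioi ha (inv_pos.2 hμ), one_div, inv_inv,
    rpow_sub_one hμ.ne']
  field_simp

lemma integrable_rpow_mul_expDensity {μ a : ℝ} (hμ : 0 < μ) (ha : 0 < a) :
    Integrable (fun y => y ^ (a - 1) * expDensity μ y) :=
  .of_integral_ne_zero (by rw [integral_rpow_mul_expDensity hμ ha]; positivity)

lemma integral_expDensity {μ : ℝ} (hμ : 0 < μ) : ∫ y, expDensity μ y = 1 := by
  simpa using integral_rpow_mul_expDensity hμ one_pos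

lemma integrable_expDensity {μ : ℝ} (hμ : 0 < μ) : Integrable (expDensity μ) := by
  simpa using integrable_rpow_mul_expDensity hμ one_pos

lemma integral_id_mul_expDensity {μ : ℝ} (hμ : 0 < μ) : ∫ y, y * expDensity μ y = μ := by
  simpa [show (2 : ℝ) - 1 = 1 by norm_num] using integral_rpow_mul_expDensity hμ two_pos

lemma integrable_id_mul_expDensity {μ : ℝ} (hμ : 0 < μ) :
    Integrable (fun y => y * expDensity μ y) := by
  simpa [show (2 : ℝ) - 1 = 1 by norm_num] using integrable_rpow_mul_expDensity hμ two_pos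

lemma expDensity_scale {c : ℝ} (hc : 0 < c) (μ y : ℝ) :
    c⁻¹ * expDensity μ (c⁻¹ * y) = expDensity (c * μ) y := by
  have hcy : 0 ≤ c⁻¹ * y ↔ 0 ≤ y := by rw [mul_nonneg_iff_of_pos_left (inv_pos.2 hc)]
  by_cases hy : 0 ≤ y
  · rw [expDensity, expDensity, if_pos (hcy.2 hy), if_pos hy, mul_inv, div_eq_inv_mul,
      div_eq_inv_mul, mul_inv]
    ring_nf
  · rw [expDensity, expDensity, if_neg (mt hcy.1 hy), if_neg hy, mul_zero]

lemma log_expDensity_of_nonneg {μ y : ℝ} (hμ : 0 < μ) (hy : 0 ≤ y) :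
    log (expDensity μ y) = -log μ - μ⁻¹ * y := by
  rw [expDensity, if_pos hy, log_mul (by positivity) (exp_ne_zero _), log_exp, log_inv,
    div_eq_inv_mul]
  ring

lemma mul_log_expDensity_ae_eq {μ : ℝ} (hμ : 0 < μ) {p : ℝ → ℝ}
    (hp : ∀ᵐ y, p y ≠ 0 → 0 ≤ y) :
    (fun y => p y * log (expDensity μ y)) =ᵐ[volume]
      fun y => -log μ * p y - μ⁻¹ * (y * p y) := by
  filter_upwards [hp] with y hy
  by_cases hpy : p y = 0
  · simp [hpy]
  · rw [log_expDensity_of_nonneg hμ (hy hpy)]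
    ring

lemma integral_mul_log_expDensity {μ : ℝ} (hμ : 0 < μ) {p : ℝ → ℝ}
    (hp : ∀ᵐ y, p y ≠ 0 → 0 ≤ y) (hp_int : Integrable p)
    (hp_mean : Integrable fun y => y * p y) :
    ∫ y, p y * log (expDensity μ y) = -log μ * (∫ y, p y) - μ⁻¹ * ∫ y, y * p y := by
  rw [integral_congr_ae (mul_log_expDensity_ae_eq hμ hp),
    integral_sub (hp_int.const_mul _) (hp_mean.const_mul _), integral_const_mul,
    integral_const_mul]

lemma entWellDef_expDensity {μ : ℝ} (hμ : 0 < μ) : EntWellDef (expDensity μ) :=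
  (((integrable_expDensity hμ).const_mul _).sub
    ((integrable_id_mul_expDensity hμ).const_mul _)).congr
    (mul_log_expDensity_ae_eq hμ (.of_forall fun _ => nonneg_of_expDensity_ne_zero)).symm

lemma dEnt_expDensity {μ : ℝ} (hμ : 0 < μ) : dEnt (expDensity μ) = log (exp 1 * μ) := by
  rw [dEnt, integral_mul_log_expDensity hμ (.of_forall fun _ => nonneg_of_expDensity_ne_zero)
    (integrable_expDensity hμ) (integrable_id_mul_expDensity hμ), integral_expDensity hμ,
    integral_id_mul_expDensity hμ, log_mul (exp_ne_zero 1) hμ.ne', log_exp,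
    inv_mul_cancel₀ hμ.ne']
  ring

lemma mul_log_sub_mul_log_le_sub {p q : ℝ} (hp : 0 ≤ p) (hq : 0 ≤ q) (hpq : 0 < p → 0 < q) :
    p * log q - p * log p ≤ q - p := by
  rcases hp.eq_or_lt with rfl | hp
  · simpa using hq
  have hq := hpq hp
  calc p * log q - p * log p = p * log (q / p) := by rw [log_div hq.ne' hp.ne']; ring
    _ ≤ p * (q / p - 1) := by gcongr; exact log_le_sub_one_of_pos (div_pos hq hp)
    _ = q - p := by field_simp

lemma integral_mul_log_le_integral_mul_log_s18 {p q : ℝ → ℝ} (hp : ∀ y, 0 ≤ p y)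
    (hq : ∀ y, 0 ≤ q y) (hpq : ∀ᵐ y, 0 < p y → 0 < q y) (hp_int : Integrable p)
    (hq_int : Integrable q) (hqp : ∫ y, q y ≤ ∫ y, p y)
    (hplogp : Integrable fun y => p y * log (p y)) (hplogq : Integrable fun y => p y * log (q y)) :
    ∫ y, p y * log (q y) ≤ ∫ y, p y * log (p y) := by
  have key : ∫ y, (p y * log (q y) - p y * log (p y)) ≤ ∫ y, (q y - p y) :=
    integral_mono_ae (hplogq.sub hplogp) (hq_int.sub hp_int)
      (hpq.mono fun y hy => mul_log_sub_mul_log_le_sub (hp y) (hq y) hy)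
  rw [integral_sub hplogq hplogp, integral_sub hq_int hp_int] at key
  linarith

lemma dEnt_le_log_exp_mul_of_integral_id_mul_le {μ : ℝ} (hμ : 0 < μ) {p : ℝ → ℝ}
    (hp : ∀ y, 0 ≤ p y) (hp_supp : ∀ᵐ y, p y ≠ 0 → 0 ≤ y) (hp_int : Integrable p)
    (hp_one : ∫ y, p y = 1) (hp_mean_int : Integrable fun y => y * p y)
    (hp_mean : ∫ y, y * p y ≤ μ) (hp_ent : EntWellDef p) :
    dEnt p ≤ log (exp 1 * μ) := by
  have hcross := integral_mul_log_expDensity hμ hp_supp hp_int hp_mean_int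
  have hgibbs : ∫ y, p y * log (expDensity μ y) ≤ ∫ y, p y * log (p y) :=
    integral_mul_log_le_integral_mul_log_s18 hp (expDensity_nonneg hμ)
      (hp_supp.mono fun y hy hpy => by
        rw [expDensity, if_pos (hy hpy.ne')]; positivity)
      hp_int (integrable_expDensity hμ) (by rw [integral_expDensity hμ, hp_one]) hp_ent
      ((hp_int.const_mul _).sub (hp_mean_int.const_mul _) |>.congr
        (mul_log_expDensity_ae_eq hμ hp_supp).symm)
  have hmean : μ⁻¹ * ∫ y, y * p y ≤ 1 := by
    rw [inv_mul_le_iff₀ hμ, mul_one]; exact hp_mean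
  rw [dEnt, log_mul (exp_ne_zero 1) hμ.ne', log_exp]
  rw [hcross, hp_one] at hgibbs
  linarith

lemma MeasurableEquiv.map_withDensity {α β : Type*} [MeasurableSpace α] [MeasurableSpace β]
    (e : α ≃ᵐ β) (μ : Measure α) (f : α → ℝ≥0∞) :
    (μ.withDensity f).map e = (μ.map e).withDensity (f ∘ e.symm) := by
  ext s hs
  rw [Measure.map_apply e.measurable hs, withDensity_apply _ (e.measurable hs),
    withDensity_apply _ hs, e.restrict_map, lintegral_map_equiv]
  simp

lemma map_const_mul_volume_withDensity {c : ℝ} (hc : 0 < c) (p : ℝ → ℝ) :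
    (volume.withDensity fun x => ENNReal.ofReal (p x)).map (c * ·) =
      volume.withDensity fun y => ENNReal.ofReal (c⁻¹ * p (c⁻¹ * y)) := by
  let e : ℝ ≃ᵐ ℝ := (Homeomorph.mulLeft₀ c hc.ne').toMeasurableEquiv
  have he : ⇑e = (c * ·) := rfl
  have he_symm : ⇑e.symm = (c⁻¹ * ·) := rfl
  rw [← he, e.map_withDensity, he, Real.map_volume_mul_left hc.ne', withDensity_smul_measure,
    ← withDensity_smul' _ _ ENNReal.ofReal_ne_top]
  congr 1
  funext y
  simp [he_symm, ENNReal.ofReal_mul (inv_nonneg.2 hc.le), abs_of_pos hc]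

section HasDens

variable {Z : Ω → ℝ} {p : ℝ → ℝ}

lemma HasDens.integrable_comp_iff_s18 (h : HasDens Z p) {f : ℝ → ℝ} (hf : Measurable f) :
    Integrable (fun ω => f (Z ω)) ↔ Integrable (fun y => f y * p y) := by
  rw [← Function.comp_def, ← integrable_map_measure hf.aestronglyMeasurable h.1.aemeasurable,
    h.2.2.2,
    integrable_withDensity_iff h.2.1.ennreal_ofReal (.of_forall fun _ => ENNReal.ofReal_lt_top)]
  simp only [ENNReal.toReal_ofReal (h.2.2.1 _)]

lemma HasDens.integral_comp_s18 (h : HasDens Z p) {f : ℝ → ℝ} (hf : Measurable f) :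
    ∫ ω, f (Z ω) = ∫ y, f y * p y := by
  rw [← integral_map h.1.aemeasurable hf.aestronglyMeasurable, h.2.2.2,
    integral_withDensity_eq_integral_toReal_smul h.2.1.ennreal_ofReal
      (.of_forall fun _ => ENNReal.ofReal_lt_top)]
  simp only [ENNReal.toReal_ofReal (h.2.2.1 _), smul_eq_mul, mul_comm]

lemma HasDens.integrable_iff (h : HasDens Z p) :
    Integrable Z ↔ Integrable (fun y => y * p y) :=
  h.integrable_comp_iff_s18 (f := fun y => y) measurable_id

lemma HasDens.integral_eq (h : HasDens Z p) : ∫ ω, Z ω = ∫ y, y * p y :=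
  h.integral_comp_s18 (f := fun y => y) measurable_id

lemma HasDens.integrable_dens [IsProbabilityMeasure (ℙ : Measure Ω)] (h : HasDens Z p) :
    Integrable p := by
  simpa using (h.integrable_comp_iff_s18 (f := fun _ => 1) measurable_const).1 (integrable_const 1)

lemma HasDens.integral_dens [IsProbabilityMeasure (ℙ : Measure Ω)] (h : HasDens Z p) :
    ∫ y, p y = 1 := by
  simpa using (h.integral_comp_s18 (f := fun _ => 1) measurable_const).symm

lemma HasDens.ae_nonneg_iff (h : HasDens Z p) :
    (∀ᵐ ω, 0 ≤ Z ω) ↔ ∀ᵐ y, p y ≠ 0 → 0 ≤ y := by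
  rw [← ae_map_iff h.1.aemeasurable measurableSet_Ici, h.2.2.2,
    ae_withDensity_iff h.2.1.ennreal_ofReal]
  simp only [ne_eq, ENNReal.ofReal_eq_zero, (h.2.2.1 _).ge_iff_eq']

lemma HasDens.const_mul (h : HasDens Z p) {c : ℝ} (hc : 0 < c) :
    HasDens (fun ω => c * Z ω) (fun y => c⁻¹ * p (c⁻¹ * y)) := by
  obtain ⟨hZ, hp, hp0, hmap⟩ := h
  refine ⟨hZ.const_mul c, (hp.comp (measurable_const_mul _)).const_mul _,
    fun y => mul_nonneg (inv_nonneg.2 hc.le) (hp0 _), ?_⟩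
  rw [← map_const_mul_volume_withDensity hc, ← hmap,
    Measure.map_map (measurable_const_mul c) hZ]
  rfl

lemma HasDens.const_mul_of_expDensity {μ : ℝ} (h : HasDens Z (expDensity μ)) {c : ℝ}
    (hc : 0 < c) : HasDens (fun ω => c * Z ω) (expDensity (c * μ)) := by
  simpa only [expDensity_scale hc] using h.const_mul hc

end HasDens

section ExponentialNoise

variable {N : Ω → ℝ} {m : ℝ}

lemma HasDens.ae_nonneg_of_expDensity (hN : HasDens N (expDensity m)) : ∀ᵐ ω, 0 ≤ N ω :=
  hN.ae_nonneg_iff.2 (.of_forall fun _ => nonneg_of_expDensity_ne_zero)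

lemma HasDens.integrable_of_expDensity (hm : 0 < m) (hN : HasDens N (expDensity m)) :
    Integrable N :=
  hN.integrable_iff.2 (integrable_id_mul_expDensity hm)

lemma HasDens.integral_of_expDensity (hm : 0 < m) (hN : HasDens N (expDensity m)) :
    ∫ ω, N ω = m :=
  hN.integral_eq.trans (integral_id_mul_expDensity hm)

theorem dEnt_le_of_hasDens_add_of_expDensity [IsProbabilityMeasure (ℙ : Measure Ω)]
    (hm : 0 < m) (hN : HasDens N (expDensity m)) {X : Ω → ℝ} {β : ℝ} {pY : ℝ → ℝ}
    (hX_int : Integrable X) (hX_nonneg : ∀ᵐ ω, 0 ≤ X ω) (hX_mean : ∫ ω, X ω ≤ β)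
    (hY : HasDens (fun ω => X ω + N ω) pY) (hY_ent : EntWellDef pY) :
    dEnt pY ≤ log (exp 1 * (m + β)) := by
  have hN_int := hN.integrable_of_expDensity hm
  have hβ : 0 ≤ β := (integral_nonneg_of_ae hX_nonneg).trans hX_mean
  have hY_nonneg : ∀ᵐ ω, 0 ≤ X ω + N ω := by
    filter_upwards [hX_nonneg, hN.ae_nonneg_of_expDensity] with ω using add_nonneg
  have hY_mean : ∫ y, y * pY y ≤ m + β := by
    rw [← hY.integral_eq, integral_add hX_int hN_int, hN.integral_of_expDensity hm]
    linarith
  exact dEnt_le_log_exp_mul_of_integral_id_mul_le (by linarith) hY.2.2.1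
    (hY.ae_nonneg_iff.1 hY_nonneg) hY.integrable_dens hY.integral_dens
    (hY.integrable_iff.1 (hX_int.add hN_int)) hY_mean hY_ent

end ExponentialNoise

/-- exponential noise, linear cost, amplitude constraint `X ≥ 0`:
for `N ~ exp(μ_N⁻¹)` and budget `β > 0`, every nonnegative input with `E X ≤ β` gives
`h(X+N) ≤ ln(e(μ_N+β))`, with equality for the dependent input `X† = (β/μ_N)·N`, for
which `X†` is exponential with mean `β` and `Y† = X†+N` is exponential with mean
`μ_N+β`; in particular `sup{h(Y) : Y ∈ Σ(N;x,β,[0,∞))} = ln(e(μ_N+β))`. -/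
theorem exponential_noise_linear_cost
    {Ω : Type*} [MeasureSpace Ω] [IsProbabilityMeasure (ℙ : Measure Ω)]
    (N : Ω → ℝ) (m : ℝ) (hm : 0 < m)
    (hN : HasDens N (fun n => if 0 ≤ n then m⁻¹ * Real.exp (-(n / m)) else 0))
    (β : ℝ) (hβ : 0 < β) :
    (∀ (X : Ω → ℝ) (pY : ℝ → ℝ), Measurable X → Integrable X (ℙ : Measure Ω) →
      (∀ᵐ ω ∂(ℙ : Measure Ω), 0 ≤ X ω) → (∫ ω, X ω ∂(ℙ : Measure Ω)) ≤ β →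
      HasDens (fun ω => X ω + N ω) pY → EntWellDef pY →
      dEnt pY ≤ Real.log (Real.exp 1 * (m + β))) ∧
    HasDens (fun ω => (β / m) * N ω)
      (fun n => if 0 ≤ n then β⁻¹ * Real.exp (-(n / β)) else 0) ∧
    (∫ ω, (β / m) * N ω ∂(ℙ : Measure Ω)) = β ∧
    HasDens (fun ω => (β / m) * N ω + N ω)
      (fun n => if 0 ≤ n then (m + β)⁻¹ * Real.exp (-(n / (m + β))) else 0) ∧
    dEnt (fun n => if 0 ≤ n then (m + β)⁻¹ * Real.exp (-(n / (m + β))) else 0) =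
      Real.log (Real.exp 1 * (m + β)) ∧
    sSup (SigmaEntAmp N (fun x => x) β (Set.Ici 0)) = Real.log (Real.exp 1 * (m + β)) := by
  change HasDens N (expDensity m) at hN
  have hmβ : 0 < m + β := by linarith
  have hX : HasDens (fun ω => β / m * N ω) (expDensity β) := by
    simpa only [div_mul_cancel₀ β hm.ne'] using hN.const_mul_of_expDensity (div_pos hβ hm)
  have hX_mean : ∫ ω, β / m * N ω = β := by
    rw [integral_const_mul, hN.integral_of_expDensity hm, div_mul_cancel₀ β hm.ne']
  have hY : HasDens (fun ω => β / m * N ω + N ω) (expDensity (m + β)) := by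
    have hY_eq : (fun ω => β / m * N ω + N ω) = fun ω => (m + β) / m * N ω := by
      funext ω; field_simp; ring
    simpa only [hY_eq, div_mul_cancel₀ _ hm.ne'] using
      hN.const_mul_of_expDensity (div_pos hmβ hm)
  refine ⟨fun X pY _ => dEnt_le_of_hasDens_add_of_expDensity hm hN, hX, hX_mean, hY,
    dEnt_expDensity hmβ, IsGreatest.csSup_eq ⟨?_, ?_⟩⟩
  · have hN_int := hN.integrable_of_expDensity hm
    exact ⟨_, _, ⟨hN.1.const_mul _, hN_int.const_mul _, hN_int.const_mul _, hX_mean.le⟩,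
      hN.ae_nonneg_of_expDensity.mono fun ω hω => mul_nonneg (div_pos hβ hm).le hω,
      hY, entWellDef_expDensity hmβ, (dEnt_expDensity hmβ).symm⟩
  · rintro _ ⟨X, pY, ⟨-, hX_int, -, hX_mean⟩, hX_nonneg, hY, hY_ent, rfl⟩
    exact dEnt_le_of_hasDens_add_of_expDensity hm hN hX_int hX_nonneg hX_mean hY hY_ent
end
end
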